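/- arXiv:1910.12102 — 6 statements merged into one kernel-verified Lean document; each statement's English description precedes it below -/
import Mathlib

section
/- For every integer n ≥ 4 and every integer k ≥ 2, φ_k(P_n) = k·(φ_k(P_{n−2}) + φ_{k−1}(P_{n−2})) + C(k,2)·((k−2)!·S(n−2,k−2) + 2·(k−1)!·S(n−2,k−1) + k!·S(n−2,k)). -/
open SimpleGraph

def IsDistinguishing {V : Type*} {k : ℕ} (G : SimpleGraph V) (c : V → Fin k) : Prop :=
  ∀ α : G ≃g G, (∀ v, c (α v) = c v) → ∀ v, α v = v

noncomputable def Phi {V : Type*} (G : SimpleGraph V) (k : ℕ) : ℕ :=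
  Nat.card (Quot (fun c₁ c₂ : {c : V → Fin k // IsDistinguishing G c} =>
    ∃ α : G ≃g G, ∀ v, c₁.1 v = c₂.1 (α v)))

noncomputable def phi {V : Type*} (G : SimpleGraph V) (k : ℕ) : ℕ :=
  Nat.card (Quot (fun c₁ c₂ : {c : V → Fin k // IsDistinguishing G c ∧ Function.Surjective c} =>
    ∃ α : G ≃g G, ∀ v, c₁.1 v = c₂.1 (α v)))

noncomputable def theta {V : Type*} (G : SimpleGraph V) : ℕ :=
  sInf {t | ∀ k, t ≤ k → ∀ c : V → Fin k, Function.Surjective c → IsDistinguishing G c}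

def stirling2 : ℕ → ℕ → ℕ
  | 0, 0 => 1
  | 0, _ + 1 => 0
  | _ + 1, 0 => 0
  | n + 1, k + 1 => (k + 1) * stirling2 n (k + 1) + stirling2 n k

def IsDCPartition {V : Type*} [DecidableEq V] [Fintype V] (G : SimpleGraph V)
    (P : Finpartition (Finset.univ : Finset V)) : Prop :=
  ∀ α : G ≃g G, (∀ p ∈ P.parts, p.image ⇑α = p) → ∀ v, α v = v

def IsDPartition {V : Type*} [DecidableEq V] [Fintype V] (G : SimpleGraph V)
    (P : Finpartition (Finset.univ : Finset V)) : Prop :=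
  ∀ α : G ≃g G, P.parts.image (fun p => p.image ⇑α) = P.parts → ∀ v, α v = v

def PartEquiv {V : Type*} [DecidableEq V] [Fintype V] (G : SimpleGraph V)
    (P₁ P₂ : Finpartition (Finset.univ : Finset V)) : Prop :=
  ∃ α : G ≃g G, P₁.parts.image (fun p => p.image ⇑α) = P₂.parts

noncomputable def psi {V : Type*} [DecidableEq V] [Fintype V] (G : SimpleGraph V) (k : ℕ) : ℕ :=
  Nat.card (Quot (fun P₁ P₂ : {P : Finpartition (Finset.univ : Finset V) //
      IsDCPartition G P ∧ P.parts.card = k} => PartEquiv G P₁.1 P₂.1))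

noncomputable def PsiAtMost {V : Type*} [DecidableEq V] [Fintype V] (G : SimpleGraph V) (k : ℕ) : ℕ :=
  Nat.card (Quot (fun P₁ P₂ : {P : Finpartition (Finset.univ : Finset V) //
      IsDCPartition G P ∧ P.parts.card ≤ k} => PartEquiv G P₁.1 P₂.1))

noncomputable def PiAtMost {V : Type*} [DecidableEq V] [Fintype V] (G : SimpleGraph V) (k : ℕ) : ℕ :=
  Nat.card (Quot (fun P₁ P₂ : {P : Finpartition (Finset.univ : Finset V) //
      P.parts.card ≤ k} => PartEquiv G P₁.1 P₂.1))

noncomputable def XiAtMost {V : Type*} [DecidableEq V] [Fintype V] (G : SimpleGraph V) (k : ℕ) : ℕ :=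
  Nat.card (Quot (fun P₁ P₂ : {P : Finpartition (Finset.univ : Finset V) //
      IsDPartition G P ∧ P.parts.card ≤ k} => PartEquiv G P₁.1 P₂.1))

def kneserGraph2 (n : ℕ) : SimpleGraph {s : Finset (Fin n) // s.card = 2} where
  Adj a b := Disjoint a.1 b.1
  symm := ⟨fun a b h => h.symm⟩
  loopless := by
    constructor
    rintro ⟨s, hs⟩ h
    simp only [disjoint_self, Finset.bot_eq_empty] at h
    simp [h] at hs

def lexProd {V W : Type*} (X : SimpleGraph V) (Y : SimpleGraph W) : SimpleGraph (V × W) where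
  Adj a b := X.Adj a.1 b.1 ∨ (a.1 = b.1 ∧ Y.Adj a.2 b.2)
  symm := by
    constructor
    rintro ⟨x, y⟩ ⟨x', y'⟩ (h | ⟨h, h'⟩)
    · exact Or.inl h.symm
    · exact Or.inr ⟨h.symm, h'.symm⟩
  loopless := by
    constructor
    rintro ⟨x, y⟩ (h | ⟨-, h⟩)
    · exact X.irrefl h
    · exact Y.irrefl h

def IsNaturalAut {V W : Type*} (X : SimpleGraph V) (Y : SimpleGraph W)
    (μ : lexProd X Y ≃g lexProd X Y) : Prop :=
  ∀ x : V, ∃ x' : V, (fun p => μ p) '' ({x} ×ˢ (Set.univ : Set W)) = {x'} ×ˢ (Set.univ : Set W)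

noncomputable def distNumber {V : Type*} (G : SimpleGraph V) : ℕ :=
  sInf {k | ∃ c : V → Fin k, IsDistinguishing G c}

/-!
The automorphism group of a graph acts freely on its distinguishing colorings, so
`φ_k(G) · |Aut G|` is the number of distinguishing surjective colorings. For `n ≥ 2` the
automorphisms of `Pₙ` are the identity and the reversal, so a coloring is distinguishing exactly
when it is not a palindrome, and a palindrome is determined by its first `⌈n/2⌉` values. Hence
`2 φ_k(Pₙ) = k! S(n,k) - k! S(⌈n/2⌉,k)`. Since `⌈n/2⌉ = ⌈(n-2)/2⌉ + 1`, the recurrence follows by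
expanding `k! S(n,k)` twice and `k! S(⌈n/2⌉,k)` once with
`k! S(m+1,k) = k (k! S(m,k) + (k-1)! S(m,k-1))`.
-/

open Function
open scoped Nat

lemma card_subtype_and_add_card_subtype_and_not {α : Type*} [Finite α] (p q : α → Prop) :
    Nat.card {a // p a ∧ q a} + Nat.card {a // p a ∧ ¬q a} = Nat.card {a // p a} := by
  classical
  rw [← Nat.card_congr (Equiv.subtypeSubtypeEquivSubtypeInter p q),
    ← Nat.card_congr (Equiv.subtypeSubtypeEquivSubtypeInter p (¬q ·)), ← Nat.card_sum]
  exact Nat.card_congr (Equiv.sumCompl _)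

section Surjections

variable {α β : Type*}

lemma card_insert_range_eq_univ [Finite α] [Finite β] (a : β) :
    Nat.card {g : α → β // insert a (Set.range g) = Set.univ} =
      Nat.card {g : α → β // Surjective g} + Nat.card {g : α → {y // y ≠ a} // Surjective g} := by
  classical
  rw [← Nat.card_congr (Equiv.sumCompl fun g : {g : α → β // insert a (Set.range g) = Set.univ} =>
    a ∈ Set.range g.1), Nat.card_sum]
  congr 1
  · refine Nat.card_congr ((Equiv.subtypeSubtypeEquivSubtypeInter
      (fun g : α → β => insert a (Set.range g) = Set.univ) (fun g => a ∈ Set.range g)).trans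
      (Equiv.subtypeEquivRight fun g => ?_))
    rw [← Set.range_eq_univ]
    constructor
    · rintro ⟨h, ha⟩; rwa [Set.insert_eq_of_mem ha] at h
    · intro h; rw [h]; exact ⟨Set.insert_eq_of_mem (Set.mem_univ a), Set.mem_univ a⟩
  · have avoid (g : α → β) (hg : a ∉ Set.range g) (x : α) : g x ≠ a := fun h => hg ⟨x, h⟩
    have hsurj (g : {g : α → β // insert a (Set.range g) = Set.univ}) (hg : a ∉ Set.range g.1) :
        Surjective fun x => (⟨g.1 x, avoid g.1 hg x⟩ : {y // y ≠ a}) := by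
      intro y
      have : y.1 ∈ insert a (Set.range g.1) := by rw [g.2]; exact Set.mem_univ _
      obtain ⟨x, hx⟩ := this.resolve_left y.2
      exact ⟨x, Subtype.ext hx⟩
    have hcover (g : α → {y // y ≠ a}) (hg : Surjective g) :
        insert a (Set.range fun x => (g x).1) = Set.univ := by
      refine Set.eq_univ_of_forall fun y => ?_
      by_cases hy : y = a
      · rw [hy]; exact Set.mem_insert _ _
      · obtain ⟨x, hx⟩ := hg ⟨y, hy⟩
        exact Set.mem_insert_of_mem _ ⟨x, congrArg Subtype.val hx⟩
    exact Nat.card_congr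
      { toFun := fun g => ⟨_, hsurj g.1 g.2⟩
        invFun := fun g => ⟨⟨_, hcover g.1 g.2⟩, fun ⟨x, hx⟩ => (g.1 x).2 hx⟩
        left_inv := fun g => rfl
        right_inv := fun g => rfl }

lemma factorial_mul_stirling2_succ_succ (n k : ℕ) :
    (k + 1)! * stirling2 (n + 1) (k + 1) =
      (k + 1) * ((k + 1)! * stirling2 n (k + 1) + k ! * stirling2 n k) := by
  rw [stirling2, Nat.factorial_succ]; ring

theorem card_surjective_fin_arrow (n : ℕ) (β : Type*) [Fintype β] :
    Nat.card {f : Fin n → β // Surjective f} =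
      (Fintype.card β)! * stirling2 n (Fintype.card β) := by
  classical
  induction n generalizing β with
  | zero =>
    rcases h : Fintype.card β with _ | k
    · have : IsEmpty β := Fintype.card_eq_zero_iff.mp h
      rw [Nat.card_congr (Equiv.subtypeUnivEquiv fun f : Fin 0 → β => isEmptyElim)]
      simp [stirling2]
    · have : Nonempty β := Fintype.card_pos_iff.mp (by omega)
      have : IsEmpty {f : Fin 0 → β // Surjective f} :=
        ⟨fun f => (f.2 (Classical.arbitrary β)).elim (fun x _ => x.elim0)⟩
      simp [stirling2]
  | succ n ih =>
    have hcons : ∀ p : β × (Fin n → β),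
        insert p.1 (Set.range p.2) = Set.univ ↔ Surjective (Fin.consEquiv (fun _ => β) p) := by
      intro p
      change _ ↔ Surjective (Fin.cons p.1 p.2 : Fin (n + 1) → β)
      rw [← Set.range_eq_univ, Fin.range_cons]
    rw [Nat.card_congr (((Fin.consEquiv fun _ => β).subtypeEquiv hcons).symm.trans
      (Equiv.subtypeProdEquivSigmaSubtype fun a g => insert a (Set.range g) = Set.univ)),
      Nat.card_sigma]
    have hne (a : β) : Fintype.card {y // y ≠ a} = Fintype.card β - 1 := Set.card_ne_eq a
    simp only [card_insert_range_eq_univ, ih, hne, Finset.sum_const, Finset.card_univ,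
      smul_eq_mul]
    rcases Fintype.card β with _ | k
    · simp [stirling2]
    · exact (factorial_mul_stirling2_succ_succ n k).symm

end Surjections

section Distinguishing

variable {V : Type*} {G : SimpleGraph V} {k : ℕ}

attribute [local instance] arrowAction

lemma aut_smul_apply (g : G ≃g G) (c : V → Fin k) (v : V) : (g • c) v = c (g⁻¹ v) := rfl

lemma isDistinguishing_smul {g : G ≃g G} {c : V → Fin k} (hc : IsDistinguishing G c) :
    IsDistinguishing G (g • c) := by
  intro β hβ v
  have hconj : ∀ w, (g⁻¹ * β * g) w = w :=
    hc _ fun w => by simpa [RelIso.mul_apply, aut_smul_apply] using hβ (g w)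
  simpa [RelIso.mul_apply] using congrArg g (hconj (g⁻¹ v))

variable (G k) in
def distinguishingSurjective : SubMulAction (G ≃g G) (V → Fin k) where
  carrier := {c | IsDistinguishing G c ∧ Surjective c}
  smul_mem' g _ hc := ⟨isDistinguishing_smul hc.1, hc.2.comp (g⁻¹).surjective⟩

variable (G k) in
theorem phi_mul_card_aut :
    phi G k * Nat.card (G ≃g G) =
      Nat.card {c : V → Fin k // IsDistinguishing G c ∧ Surjective c} := by
  have hfree (c : distinguishingSurjective G k) : MulAction.stabilizer (G ≃g G) c = ⊥ := by
    refine (Subgroup.eq_bot_iff_forall _).mpr fun g hg => ?_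
    have hfix : ∀ v, c.1 (g⁻¹ v) = c.1 v := fun v => congrFun (congrArg Subtype.val hg) v
    exact (inv_eq_one.mp (RelIso.ext (c.2.1 g⁻¹ hfix)))
  have horbit : phi G k = Nat.card (MulAction.orbitRel.Quotient (G ≃g G)
      (distinguishingSurjective G k)) := by
    refine Nat.card_congr (Quot.congr (Equiv.refl _) fun c₁ c₂ => ?_)
    rw [MulAction.orbitRel_apply, MulAction.mem_orbit_iff]
    constructor
    · rintro ⟨α, hα⟩
      exact ⟨α⁻¹, Subtype.ext (funext fun v => (hα v).symm)⟩
    · rintro ⟨g, hg⟩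
      exact ⟨g⁻¹, fun v => (congrFun (congrArg Subtype.val hg) v).symm⟩
  rw [horbit, ← Nat.card_prod]
  exact Nat.card_congr (MulAction.selfEquivOrbitsQuotientProd hfree).symm

end Distinguishing

section PathGraph

def pathGraphReverse (n : ℕ) : pathGraph n ≃g pathGraph n where
  toEquiv := Fin.revPerm
  map_rel_iff' {u v} := by
    simp only [Fin.revPerm_apply, pathGraph_adj, Fin.val_rev]
    omega

variable {n : ℕ}

lemma pathGraph_iso_apply_zero_eq_zero_or_last (α : pathGraph (n + 1) ≃g pathGraph (n + 1)) :
    α 0 = 0 ∨ α 0 = Fin.last n := by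
  by_contra! hmid
  have hpos : 0 < (α 0).val := Fin.pos_iff_ne_zero.mpr hmid.1
  have hlt : (α 0).val < n := lt_of_le_of_ne (Fin.le_last _) (Fin.val_ne_of_ne hmid.2)
  have hone (w : Fin (n + 1)) (hw : (pathGraph (n + 1)).Adj w (α 0)) : (α.symm w).val = 1 := by
    have := α.symm.map_adj_iff.mpr hw
    rw [α.symm_apply_apply, pathGraph_adj] at this
    simp only [Fin.val_zero] at this
    omega
  have hpred := hone ⟨(α 0).val - 1, by omega⟩ (pathGraph_adj.mpr (Or.inl (by simp only; omega)))
  have hsucc := hone ⟨(α 0).val + 1, by omega⟩ (pathGraph_adj.mpr (Or.inr rfl))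
  have := Fin.val_eq_of_eq (α.symm.injective (Fin.ext (hpred.trans hsucc.symm)))
  simp only at this
  omega

lemma pathGraph_iso_eq_one_of_apply_zero (α : pathGraph (n + 1) ≃g pathGraph (n + 1))
    (h : α 0 = 0) : α = 1 := by
  suffices ∀ j (hj : j < n + 1), (α ⟨j, hj⟩).val = j from RelIso.ext fun v => Fin.ext (this v v.2)
  intro j
  induction j using Nat.strong_induction_on with
  | _ j ih =>
    intro hj
    rcases j with _ | i
    · rw [show (⟨0, hj⟩ : Fin (n + 1)) = 0 from rfl, h, Fin.val_zero]
    · have hadj := α.map_adj_iff.mpr (pathGraph_adj.mpr (Or.inl rfl) :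
        (pathGraph (n + 1)).Adj ⟨i, by omega⟩ ⟨i + 1, hj⟩)
      rw [pathGraph_adj, ih i (by omega)] at hadj
      refine (hadj.resolve_right fun hdown => ?_).symm
      have hprev := ih (i - 1) (by omega) (by omega)
      have := α.injective (Fin.ext (by rw [hprev]; omega) : α ⟨i + 1, hj⟩ = α ⟨i - 1, by omega⟩)
      simp only [Fin.mk.injEq] at this
      omega

theorem pathGraph_iso_eq_one_or_eq_reverse (α : pathGraph n ≃g pathGraph n) :
    α = 1 ∨ α = pathGraphReverse n := by
  rcases n with _ | n
  · exact Or.inl (RelIso.ext fun v => v.elim0)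
  rcases pathGraph_iso_apply_zero_eq_zero_or_last α with h | h
  · exact Or.inl (pathGraph_iso_eq_one_of_apply_zero α h)
  · have hrev : pathGraphReverse (n + 1) * α = 1 :=
      pathGraph_iso_eq_one_of_apply_zero _ (by simp [RelIso.mul_apply, h, pathGraphReverse])
    refine Or.inr (RelIso.ext fun v => ?_)
    simpa [RelIso.mul_apply, pathGraphReverse] using congrArg Fin.rev (RelIso.ext_iff.mp hrev v)

lemma pathGraphReverse_ne_one (hn : 2 ≤ n) : pathGraphReverse n ≠ 1 := fun h => by
  have := congrArg Fin.val (RelIso.ext_iff.mp h ⟨0, by omega⟩)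
  simp only [pathGraphReverse, RelIso.coe_fn_mk, Fin.revPerm_apply, Fin.val_rev,
    RelIso.one_apply] at this
  omega

theorem card_pathGraph_aut (hn : 2 ≤ n) : Nat.card (pathGraph n ≃g pathGraph n) = 2 :=
  Nat.card_eq_two_iff.mpr ⟨1, pathGraphReverse n, (pathGraphReverse_ne_one hn).symm,
    Set.eq_univ_of_forall pathGraph_iso_eq_one_or_eq_reverse⟩

theorem isDistinguishing_pathGraph_iff {k : ℕ} (hn : 2 ≤ n) (c : Fin n → Fin k) :
    IsDistinguishing (pathGraph n) c ↔ c ∘ Fin.rev ≠ c := by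
  constructor
  · intro hc hpal
    exact pathGraphReverse_ne_one hn (RelIso.ext (hc _ (congrFun hpal)))
  · intro hpal α hα
    rcases pathGraph_iso_eq_one_or_eq_reverse α with rfl | rfl
    · exact fun _ => rfl
    · exact absurd (funext hα) hpal

end PathGraph

section Palindromes

variable {n : ℕ} {β : Type*}

def halfFold (n : ℕ) (i : Fin n) : Fin ((n + 1) / 2) :=
  ⟨min i (n - 1 - i), by omega⟩

lemma add_one_div_two_le (n : ℕ) : (n + 1) / 2 ≤ n := by omega

lemma halfFold_rev (i : Fin n) : halfFold n i.rev = halfFold n i := by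
  simp only [halfFold, Fin.val_rev, Fin.mk.injEq]; omega

lemma halfFold_castLE (j : Fin ((n + 1) / 2)) :
    halfFold n (Fin.castLE (add_one_div_two_le n) j) = j := by
  ext; simp only [halfFold, Fin.val_castLE]; omega

lemma apply_castLE_halfFold {c : Fin n → β} (hc : c ∘ Fin.rev = c) (i : Fin n) :
    c (Fin.castLE (add_one_div_two_le n) (halfFold n i)) = c i := by
  rcases le_total i.val (n - 1 - i.val) with h | h
  · congr 1; ext; simp only [halfFold, Fin.val_castLE]; omega
  · rw [← congrFun hc i]; congr 1; ext; simp only [halfFold, Fin.val_castLE, Fin.val_rev]; omega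

def palindromeEquiv (n : ℕ) (β : Type*) :
    {c : Fin n → β // c ∘ Fin.rev = c} ≃ (Fin ((n + 1) / 2) → β) where
  toFun c := c.1 ∘ Fin.castLE (add_one_div_two_le n)
  invFun d := ⟨d ∘ halfFold n, funext fun i => congrArg d (halfFold_rev i)⟩
  left_inv c := Subtype.ext (funext (apply_castLE_halfFold c.2))
  right_inv d := funext fun j => congrArg d (halfFold_castLE j)

lemma surjective_palindromeEquiv_iff (c : {c : Fin n → β // c ∘ Fin.rev = c}) :
    Surjective (palindromeEquiv n β c) ↔ Surjective c.1 := by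
  refine ⟨fun h y => ?_, fun h y => ?_⟩
  · obtain ⟨j, hj⟩ := h y; exact ⟨_, hj⟩
  · obtain ⟨i, hi⟩ := h y
    exact ⟨halfFold n i, (apply_castLE_halfFold c.2 i).trans hi⟩

theorem card_surjective_palindrome (n : ℕ) (β : Type*) :
    Nat.card {c : Fin n → β // Surjective c ∧ c ∘ Fin.rev = c} =
      Nat.card {d : Fin ((n + 1) / 2) → β // Surjective d} :=
  Nat.card_congr <| (Equiv.subtypeEquivRight fun _ => and_comm).trans <|
    (Equiv.subtypeSubtypeEquivSubtypeInter _ _).symm.trans <|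
    (palindromeEquiv n β).subtypeEquiv fun c => (surjective_palindromeEquiv_iff c).symm

end Palindromes

theorem two_mul_phi_pathGraph_add {n : ℕ} (hn : 2 ≤ n) (k : ℕ) :
    2 * phi (pathGraph n) k + k ! * stirling2 ((n + 1) / 2) k = k ! * stirling2 n k := by
  have hdist : 2 * phi (pathGraph n) k =
      Nat.card {c : Fin n → Fin k // Surjective c ∧ ¬c ∘ Fin.rev = c} := by
    rw [mul_comm, ← card_pathGraph_aut hn, phi_mul_card_aut]
    exact Nat.card_congr <| Equiv.subtypeEquivRight fun c => by
      rw [isDistinguishing_pathGraph_iff hn, and_comm]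
  have hsurj := card_surjective_fin_arrow (β := Fin k)
  rw [Fintype.card_fin] at hsurj
  rw [hdist, ← hsurj, ← hsurj, ← card_surjective_palindrome, add_comm,
    card_subtype_and_add_card_subtype_and_not]

theorem phi_pathGraph_rec (n k : ℕ) (hn : 4 ≤ n) (hk : 2 ≤ k) :
    phi (pathGraph n) k =
      k * (phi (pathGraph (n - 2)) k + phi (pathGraph (n - 2)) (k - 1)) +
        k.choose 2 * ((k - 2).factorial * stirling2 (n - 2) (k - 2) +
          2 * (k - 1).factorial * stirling2 (n - 2) (k - 1) +
          k.factorial * stirling2 (n - 2) k) := by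
  obtain ⟨n, rfl⟩ : ∃ m, n = m + 4 := ⟨n - 4, by omega⟩
  obtain ⟨k, rfl⟩ : ∃ j, k = j + 2 := ⟨k - 2, by omega⟩
  rw [show n + 4 - 2 = n + 2 by omega, show k + 2 - 1 = k + 1 by omega, Nat.add_sub_cancel]
  have e₁ := two_mul_phi_pathGraph_add (show 2 ≤ n + 4 by omega) (k + 2)
  have e₂ := two_mul_phi_pathGraph_add (show 2 ≤ n + 2 by omega) (k + 2)
  have e₃ := two_mul_phi_pathGraph_add (show 2 ≤ n + 2 by omega) (k + 1)
  rw [show (n + 4 + 1) / 2 = (n + 2 + 1) / 2 + 1 by omega] at e₁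
  have r₁ := factorial_mul_stirling2_succ_succ (n + 3) (k + 1)
  have r₂ := factorial_mul_stirling2_succ_succ (n + 2) (k + 1)
  have r₃ := factorial_mul_stirling2_succ_succ (n + 2) k
  have r₄ := factorial_mul_stirling2_succ_succ ((n + 2 + 1) / 2) (k + 1)
  have hchoose : (k + 2).choose 2 * 2 = (k + 2) * (k + 1) := by
    rw [← Nat.add_one_mul_choose_eq, Nat.choose_one_right]
  qify at e₁ e₂ e₃ r₁ r₂ r₃ r₄ hchoose ⊢
  linear_combination (1 / 2 : ℚ) * (e₁ - r₄ + r₁ + (k + 2) * r₂ + (k + 2) * r₃ - (k + 2) * e₂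
    - (k + 2) * e₃ - (k ! * stirling2 (n + 2) k + 2 * (k + 1)! * stirling2 (n + 2) (k + 1)
      + (k + 2)! * stirling2 (n + 2) (k + 2) : ℚ) * hchoose)
end

section
/- For every integer n ≥ 2 and every integer k ≥ 1, the number of non-equivalent distinguishing colorings of the complete bipartite graph K_{n,n} with colors from {1,…,k} equals C(k,n)·(C(k,n) − 1)/2, i.e., Φ_k(K_{n,n}) = C(k,n)(C(k,n)−1)/2. -/
open SimpleGraph

/-!
An automorphism of `K_{V,V}` preserves the relation "same side", so it either fixes both sides or
swaps them. Hence a colouring is distinguishing iff it is injective on each side (two equally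
coloured vertices on one side are twins, and swapping them is an automorphism) and the two sides
carry different colour sets (otherwise matching equal colours across the sides gives a side-swapping
automorphism preserving it). Two such colourings are equivalent iff their unordered pairs of colour
sets agree, so the classes correspond to unordered pairs of distinct `n`-subsets of the `k` colours.
-/

open Function Finset

namespace SimpleGraph

variable {V W : Type*}

theorem completeBipartiteGraph_adj_iff_isLeft_ne {a b : V ⊕ W} :
    (completeBipartiteGraph V W).Adj a b ↔ a.isLeft ≠ b.isLeft := by
  rcases a with a | a <;> rcases b with b | b <;> simp

def Iso.swapOfTwins [DecidableEq V] {G : SimpleGraph V} {u v : V}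
    (huv : ∀ w, G.Adj u w ↔ G.Adj v w) : G ≃g G where
  toEquiv := Equiv.swap u v
  map_rel_iff' {a b} := by
    have huv' : ∀ w, G.Adj w u ↔ G.Adj w v := by simpa [adj_comm] using huv
    simp only [Equiv.swap_apply_def]
    split_ifs <;> subst_vars <;> simp_all

def completeBipartiteGraphComm : completeBipartiteGraph V W ≃g completeBipartiteGraph W V where
  toEquiv := Equiv.sumComm V W
  map_rel_iff' := by simp

theorem Iso.isLeft_apply_eq_isLeft_apply_iff
    (α : completeBipartiteGraph V W ≃g completeBipartiteGraph V W) (a b : V ⊕ W) :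
    (α a).isLeft = (α b).isLeft ↔ a.isLeft = b.isLeft := by
  have := α.map_adj_iff (v := a) (w := b)
  rw [completeBipartiteGraph_adj_iff_isLeft_ne, completeBipartiteGraph_adj_iff_isLeft_ne] at this
  exact not_iff_not.mp this

theorem Iso.isLeft_apply_eq_or (α : completeBipartiteGraph V W ≃g completeBipartiteGraph V W) :
    (∀ v, (α v).isLeft = v.isLeft) ∨ ∀ v, (α v).isLeft = v.isRight := by
  rcases isEmpty_or_nonempty (V ⊕ W) with hempty | ⟨⟨v₀⟩⟩
  · exact Or.inl fun v => isEmptyElim v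
  have h := fun v => α.isLeft_apply_eq_isLeft_apply_iff v v₀
  by_cases h₀ : (α v₀).isLeft = v₀.isLeft
  · exact Or.inl fun v => by grind
  · refine Or.inr fun v => ?_
    rw [← Sum.bnot_isLeft]
    grind

end SimpleGraph

theorem Set.image_setOf_eq_of_comp {X Y C : Type*} {c₁ : X → C} {c₂ : Y → C} (e : X ≃ Y)
    (h : ∀ x, c₁ x = c₂ (e x)) {p : Y → Prop} {q : X → Prop} (hpq : ∀ x, p (e x) ↔ q x) :
    c₁ '' {x | q x} = c₂ '' {y | p y} := by
  rw [show c₁ = c₂ ∘ e from funext h, Set.image_comp, Equiv.image_eq_preimage_symm]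
  congr 1
  ext y
  simp [← hpq (e.symm y)]

theorem Function.Injective.exists_equiv_of_image_univ_eq {ι ι' α : Type*} [Fintype ι]
    [Fintype ι'] [DecidableEq α] {f : ι → α} {g : ι' → α} (hf : Injective f) (hg : Injective g)
    (h : univ.image f = univ.image g) : ∃ σ : ι ≃ ι', ∀ i, g (σ i) = f i := by
  have hrange : Set.range f = Set.range g := by simpa using congrArg ((↑) : Finset α → Set α) h
  refine ⟨(Equiv.ofInjective f hf).trans ((Equiv.setCongr hrange).trans
    (Equiv.ofInjective g hg).symm), fun i => ?_⟩
  simpa using Equiv.apply_ofInjective_symm hg (Equiv.setCongr hrange (Equiv.ofInjective f hf i))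

theorem Finset.exists_injective_image_univ_eq {ι α : Type*} [Fintype ι] [DecidableEq α]
    (s : Finset α) (hs : s.card = Fintype.card ι) :
    ∃ f : ι → α, Injective f ∧ univ.image f = s := by
  obtain ⟨e⟩ : Nonempty (ι ≃ s) := Fintype.card_eq.mp (by simp [hs])
  refine ⟨(↑) ∘ e, Subtype.val_injective.comp e.injective, ?_⟩
  ext a
  simp only [mem_image, mem_univ, true_and, comp_apply]
  exact ⟨fun ⟨i, hi⟩ => hi ▸ (e i).2, fun ha => ⟨e.symm ⟨a, ha⟩, by simp⟩⟩

section ColorSets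

variable {V W C : Type*} {c c₁ c₂ : V ⊕ W → C}

def InjectiveOnSides (c : V ⊕ W → C) : Prop :=
  Injective (c ∘ Sum.inl) ∧ Injective (c ∘ Sum.inr)

theorem InjectiveOnSides.eq_of_isLeft_eq (hc : InjectiveOnSides c) {u v : V ⊕ W}
    (hside : u.isLeft = v.isLeft) (huv : c u = c v) : u = v := by
  rcases u with u | u <;> rcases v with v | v
  · exact congrArg Sum.inl (hc.1 huv)
  · simp at hside
  · simp at hside
  · exact congrArg Sum.inr (hc.2 huv)

variable [DecidableEq C]

def leftColors [Fintype V] (c : V ⊕ W → C) : Finset C := univ.image (c ∘ Sum.inl)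

def rightColors [Fintype W] (c : V ⊕ W → C) : Finset C := univ.image (c ∘ Sum.inr)

theorem coe_leftColors [Fintype V] (c : V ⊕ W → C) :
    (leftColors c : Set C) = c '' {v | v.isLeft} := by
  rw [leftColors, coe_image, coe_univ, Set.image_univ, Set.range_comp, Set.range_inl]

theorem coe_rightColors [Fintype W] (c : V ⊕ W → C) :
    (rightColors c : Set C) = c '' {v | v.isRight} := by
  rw [rightColors, coe_image, coe_univ, Set.image_univ, Set.range_comp, Set.range_inr]

theorem card_leftColors [Fintype V] (hc : InjectiveOnSides c) :
    (leftColors c).card = Fintype.card V := by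
  rw [leftColors, card_image_of_injective _ hc.1, card_univ]

theorem card_rightColors [Fintype W] (hc : InjectiveOnSides c) :
    (rightColors c).card = Fintype.card W := by
  rw [rightColors, card_image_of_injective _ hc.2, card_univ]

variable [Fintype V] [Fintype W]

def colorPair (c : V ⊕ W → C) : Sym2 (Finset C) := s(leftColors c, rightColors c)

theorem colors_eq_of_comp (e : V ⊕ W ≃ V ⊕ W) (he : ∀ v, (e v).isLeft = v.isLeft)
    (h : ∀ v, c₁ v = c₂ (e v)) :
    leftColors c₁ = leftColors c₂ ∧ rightColors c₁ = rightColors c₂ := by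
  simp only [← coe_inj, coe_leftColors, coe_rightColors]
  exact ⟨Set.image_setOf_eq_of_comp e h (by simp [he]),
    Set.image_setOf_eq_of_comp e h (by simp only [← Sum.not_isLeft, he, implies_true])⟩

theorem colors_eq_swap_of_comp (e : V ⊕ W ≃ V ⊕ W) (he : ∀ v, (e v).isLeft = v.isRight)
    (h : ∀ v, c₁ v = c₂ (e v)) :
    leftColors c₁ = rightColors c₂ ∧ rightColors c₁ = leftColors c₂ := by
  simp only [← coe_inj, coe_leftColors, coe_rightColors]
  exact ⟨Set.image_setOf_eq_of_comp e h
      (by simp only [← Sum.not_isLeft, he, not_not, implies_true]),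
    Set.image_setOf_eq_of_comp e h (by simp only [he, implies_true])⟩

theorem colorPair_eq_of_comp (α : completeBipartiteGraph V W ≃g completeBipartiteGraph V W)
    (h : ∀ v, c₁ v = c₂ (α v)) : colorPair c₁ = colorPair c₂ := by
  rcases α.isLeft_apply_eq_or with hα | hα
  · obtain ⟨hl, hr⟩ := colors_eq_of_comp α.toEquiv hα h
    rw [colorPair, colorPair, hl, hr]
  · obtain ⟨hl, hr⟩ := colors_eq_swap_of_comp α.toEquiv hα h
    rw [colorPair, colorPair, hl, hr, Sym2.eq_swap]

theorem exists_congr_comp_of_colors_eq (hc₁ : InjectiveOnSides c₁) (hc₂ : InjectiveOnSides c₂)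
    (hl : leftColors c₁ = leftColors c₂) (hr : rightColors c₁ = rightColors c₂) :
    ∃ (σ : V ≃ V) (τ : W ≃ W), ∀ v, c₁ v = c₂ (completeBipartiteGraphCongr σ τ v) := by
  obtain ⟨σ, hσ⟩ := hc₁.1.exists_equiv_of_image_univ_eq hc₂.1 hl
  obtain ⟨τ, hτ⟩ := hc₁.2.exists_equiv_of_image_univ_eq hc₂.2 hr
  refine ⟨σ, τ, ?_⟩
  rintro (i | i)
  · exact (hσ i).symm
  · exact (hτ i).symm

theorem exists_swap_comp_of_colors_eq (hc₁ : InjectiveOnSides c₁) (hc₂ : InjectiveOnSides c₂)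
    (hl : leftColors c₁ = rightColors c₂) (hr : rightColors c₁ = leftColors c₂) :
    ∃ (σ : V ≃ W) (τ : W ≃ V), ∀ v, c₁ v =
      c₂ ((completeBipartiteGraphCongr σ τ).trans completeBipartiteGraphComm v) := by
  obtain ⟨σ, hσ⟩ := hc₁.1.exists_equiv_of_image_univ_eq hc₂.2 hl
  obtain ⟨τ, hτ⟩ := hc₁.2.exists_equiv_of_image_univ_eq hc₂.1 hr
  refine ⟨σ, τ, ?_⟩
  rintro (i | i)
  · exact (hσ i).symm
  · exact (hτ i).symm

theorem exists_comp_eq_iff_colorPair_eq (hc₁ : InjectiveOnSides c₁)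
    (hc₂ : InjectiveOnSides c₂) :
    (∃ α : completeBipartiteGraph V W ≃g completeBipartiteGraph V W, ∀ v, c₁ v = c₂ (α v)) ↔
      colorPair c₁ = colorPair c₂ := by
  refine ⟨fun ⟨α, h⟩ => colorPair_eq_of_comp α h, fun h => ?_⟩
  rcases Sym2.eq_iff.mp h with ⟨hl, hr⟩ | ⟨hl, hr⟩
  · obtain ⟨σ, τ, h⟩ := exists_congr_comp_of_colors_eq hc₁ hc₂ hl hr
    exact ⟨_, h⟩
  · obtain ⟨σ, τ, h⟩ := exists_swap_comp_of_colors_eq hc₁ hc₂ hl hr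
    exact ⟨_, h⟩

end ColorSets

theorem Nat.card_quot_eq_of_surjective {X Y : Type*} {r : X → X → Prop} (f : X → Y)
    (hr : ∀ a b, r a b ↔ f a = f b) (hf : Surjective f) : Nat.card (Quot r) = Nat.card Y := by
  obtain rfl : r = Setoid.ker f := funext₂ fun a b => propext ((hr a b).trans Setoid.ker_def.symm)
  exact Nat.card_congr (Setoid.quotientKerEquivOfSurjective f hf)

section Distinguishing

variable {V W : Type*} {k : ℕ}

theorem IsDistinguishing.eq_of_twins {G : SimpleGraph V} {c : V → Fin k}
    (hc : IsDistinguishing G c) {u v : V} (huv : ∀ w, G.Adj u w ↔ G.Adj v w) (hcuv : c u = c v) :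
    u = v := by
  classical
  have hfix : ∀ w, c (Equiv.swap u v w) = c w := by
    intro w
    rw [Equiv.swap_apply_def]
    split_ifs <;> simp_all
  exact (Equiv.swap_apply_right u v).symm.trans (hc (Iso.swapOfTwins huv) hfix v)

theorem isDistinguishing_completeBipartiteGraph_iff [Fintype V] [Fintype W] [Nonempty V]
    {c : V ⊕ W → Fin k} :
    IsDistinguishing (completeBipartiteGraph V W) c ↔
      InjectiveOnSides c ∧ leftColors c ≠ rightColors c := by
  constructor
  · intro hc
    have hinj : InjectiveOnSides c :=
      ⟨fun i j h => Sum.inl_injective (hc.eq_of_twins (by simp) h),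
        fun i j h => Sum.inr_injective (hc.eq_of_twins (by simp) h)⟩
    refine ⟨hinj, fun hlr => ?_⟩
    obtain ⟨σ, τ, h⟩ := exists_swap_comp_of_colors_eq hinj hinj hlr hlr.symm
    obtain ⟨v⟩ := ‹Nonempty V›
    exact Sum.inr_ne_inl (hc _ (fun w => (h w).symm) (Sum.inl v))
  · rintro ⟨hinj, hlr⟩ α hα v
    rcases α.isLeft_apply_eq_or with hside | hside
    · exact hinj.eq_of_isLeft_eq (hside v) (hα v)
    · exact absurd (colors_eq_swap_of_comp α.toEquiv hside fun w => (hα w).symm).1 hlr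

variable [Fintype V] [Nonempty V]

def distinguishingColorPair
    (c : {c : V ⊕ V → Fin k // IsDistinguishing (completeBipartiteGraph V V) c}) :
    {a : Sym2 {s : Finset (Fin k) // s.card = Fintype.card V} // ¬a.IsDiag} :=
  have hc := isDistinguishing_completeBipartiteGraph_iff.mp c.2
  ⟨s(⟨leftColors c.1, card_leftColors hc.1⟩, ⟨rightColors c.1, card_rightColors hc.1⟩),
    by simpa [Subtype.ext_iff] using hc.2⟩

theorem distinguishingColorPair_eq_iff
    {c₁ c₂ : {c : V ⊕ V → Fin k // IsDistinguishing (completeBipartiteGraph V V) c}} :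
    distinguishingColorPair c₁ = distinguishingColorPair c₂ ↔
      ∃ α : completeBipartiteGraph V V ≃g completeBipartiteGraph V V, ∀ v, c₁.1 v = c₂.1 (α v) := by
  rw [exists_comp_eq_iff_colorPair_eq (isDistinguishing_completeBipartiteGraph_iff.mp c₁.2).1
    (isDistinguishing_completeBipartiteGraph_iff.mp c₂.2).1, Subtype.ext_iff,
    ← (Sym2.map.injective Subtype.val_injective).eq_iff]
  rfl

theorem distinguishingColorPair_surjective :
    Surjective (distinguishingColorPair (V := V) (k := k)) := by
  rintro ⟨z, hz⟩
  induction z using Sym2.ind with | h s t => ?_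
  obtain ⟨f, hf, hfs⟩ := s.1.exists_injective_image_univ_eq s.2
  obtain ⟨g, hg, hgt⟩ := t.1.exists_injective_image_univ_eq t.2
  have hl : leftColors (Sum.elim f g) = s := hfs
  have hr : rightColors (Sum.elim f g) = t := hgt
  have hst : leftColors (Sum.elim f g) ≠ rightColors (Sum.elim f g) := by
    simpa [hl, hr, Subtype.ext_iff] using hz
  refine ⟨⟨Sum.elim f g, isDistinguishing_completeBipartiteGraph_iff.mpr ⟨⟨hf, hg⟩, hst⟩⟩, ?_⟩
  simp only [distinguishingColorPair, hl, hr]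

theorem Phi_completeBipartiteGraph (k : ℕ) :
    Phi (completeBipartiteGraph V V) k = (k.choose (Fintype.card V)).choose 2 := by
  rw [Phi, Nat.card_quot_eq_of_surjective distinguishingColorPair
    (fun _ _ => distinguishingColorPair_eq_iff.symm) distinguishingColorPair_surjective,
    Nat.card_eq_fintype_card, Sym2.card_subtype_not_diag, Fintype.card_finset_len,
    Fintype.card_fin]

end Distinguishing

theorem Phi_completeBipartite_general (n k : ℕ) (hn : 2 ≤ n) :
    Phi (completeBipartiteGraph (Fin n) (Fin n)) k =
      k.choose n * (k.choose n - 1) / 2 := by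
  have : Nonempty (Fin n) := ⟨⟨0, by omega⟩⟩
  rw [Phi_completeBipartiteGraph, Fintype.card_fin, Nat.choose_two_right]

theorem Phi_completeBipartite (n k : ℕ) (hn : 2 ≤ n) (hk : 1 ≤ k) :
    Phi (completeBipartiteGraph (Fin n) (Fin n)) k =
      k.choose n * (k.choose n - 1) / 2 :=
  Phi_completeBipartite_general n k hn
end

section
/- For every integer n ≥ 2, the distinguishing threshold of the path on n vertices equals ⌈n/2⌉ + 1, i.e., θ(P_n) = ⌈n/2⌉ + 1. -/
open SimpleGraph

open SimpleGraph

lemma path_aut_cases {n : ℕ} (α : pathGraph n ≃g pathGraph n) :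
    (∀ v, α v = v) ∨ (∀ v : Fin n, (α v).val = n - 1 - v.val) := by
  rcases Nat.lt_or_ge n 2 with h2 | h2
  · left
    intro v
    interval_cases n
    · exact v.elim0
    · exact Subsingleton.elim _ _
  set f : Fin n → ℕ := fun v => (α v).val with hf
  have inj : ∀ i j (hi : i < n) (hj : j < n), f ⟨i, hi⟩ = f ⟨j, hj⟩ → i = j := by
    intro i j hi hj h
    have := α.toEquiv.injective (Fin.val_injective h)
    simpa using congrArg Fin.val this
  have flt : ∀ v, f v < n := fun v => (α v).isLt
  have step : ∀ i (h : i + 1 < n),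
      f ⟨i + 1, h⟩ = f ⟨i, by omega⟩ + 1 ∨ f ⟨i, by omega⟩ = f ⟨i + 1, h⟩ + 1 := by
    intro i h
    have hadj : (pathGraph n).Adj ⟨i, by omega⟩ ⟨i + 1, h⟩ := by
      rw [pathGraph_adj]; left; rfl
    have := α.map_adj_iff.mpr hadj
    rw [pathGraph_adj] at this
    simp only [hf]
    omega
  have h1 : (1 : ℕ) < n := by omega
  have h0 : (0 : ℕ) < n := by omega
  rcases step 0 h1 with hA | hB
  · -- increasing
    have claim : ∀ i (hi : i < n), f ⟨i, hi⟩ = f ⟨0, h0⟩ + i := by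
      intro i
      induction i using Nat.strong_induction_on with
      | _ i ih =>
        intro hi
        match i with
        | 0 => simp
        | 1 => simpa using hA
        | (k + 2) =>
          have hk1 : k + 1 < n := by omega
          have hk : k < n := by omega
          have e1 := ih (k + 1) (by omega) hk1
          have e0 := ih k (by omega) hk
          rcases step (k + 1) hi with h | h
          · have h' : f ⟨k + 2, hi⟩ = f ⟨k + 1, hk1⟩ + 1 := h
            omega
          · exfalso
            have h' : f ⟨k + 1, hk1⟩ = f ⟨k + 2, hi⟩ + 1 := h
            have : f ⟨k + 2, hi⟩ = f ⟨k, hk⟩ := by omega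
            have := inj _ _ _ _ this
            omega
    left
    have hlast : f ⟨n - 1, by omega⟩ = f ⟨0, h0⟩ + (n - 1) := claim (n - 1) (by omega)
    have hle := flt ⟨n - 1, by omega⟩
    have hz : f ⟨0, h0⟩ = 0 := by omega
    intro v
    have hc := claim v.val v.isLt
    rw [hz, Fin.eta] at hc
    simp only [hf] at hc
    apply Fin.val_injective
    simpa using hc
  · -- decreasing
    have claim : ∀ i (hi : i < n), f ⟨i, hi⟩ + i = f ⟨0, h0⟩ := by
      intro i
      induction i using Nat.strong_induction_on with
      | _ i ih =>
        intro hi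
        match i with
        | 0 => simp
        | 1 => simpa using hB.symm ▸ (by omega : f ⟨1, h1⟩ + 1 = f ⟨1, h1⟩ + 1)
        | (k + 2) =>
          have hk1 : k + 1 < n := by omega
          have hk : k < n := by omega
          have e1 := ih (k + 1) (by omega) hk1
          have e0 := ih k (by omega) hk
          rcases step (k + 1) hi with h | h
          · exfalso
            have h' : f ⟨k + 2, hi⟩ = f ⟨k + 1, hk1⟩ + 1 := h
            have : f ⟨k + 2, hi⟩ = f ⟨k, hk⟩ := by omega
            have := inj _ _ _ _ this
            omega
          · have h' : f ⟨k + 1, hk1⟩ = f ⟨k + 2, hi⟩ + 1 := h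
            omega
    right
    have hlast : f ⟨n - 1, by omega⟩ + (n - 1) = f ⟨0, h0⟩ := claim (n - 1) (by omega)
    have hle := flt ⟨0, h0⟩
    have hz : f ⟨0, h0⟩ = n - 1 := by omega
    intro v
    have hc := claim v.val v.isLt
    rw [hz, Fin.eta] at hc
    simp only [hf] at hc
    omega

def pathRev (n : ℕ) : pathGraph n ≃g pathGraph n where
  toEquiv := Fin.revPerm
  map_rel_iff' := by
    intro u v
    have hu := u.isLt
    have hv := v.isLt
    simp only [Fin.revPerm_apply, pathGraph_adj, Fin.val_rev]
    omega

theorem theta_pathGraph (n : ℕ) (hn : 2 ≤ n) :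
    theta (pathGraph n) = (n + 1) / 2 + 1 := by
  set m := (n + 1) / 2 + 1 with hm
  -- the bad coloring with (n+1)/2 colors
  have hk2 : (n + 1) / 2 ≤ n := by omega
  set c₀ : Fin n → Fin ((n + 1) / 2) :=
    fun i => ⟨min i.val (n - 1 - i.val), by have := i.isLt; omega⟩ with hc₀
  have hsurj₀ : Function.Surjective c₀ := by
    intro y
    have hy := y.isLt
    refine ⟨⟨y.val, by omega⟩, ?_⟩
    apply Fin.val_injective
    simp only [hc₀]
    omega
  have hbad : ¬ IsDistinguishing (pathGraph n) c₀ := by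
    intro hd
    have hpres : ∀ v, c₀ ((pathRev n) v) = c₀ v := by
      intro v
      have hv := v.isLt
      have hrv : ((pathRev n) v).val = n - 1 - v.val := by
        show (Fin.rev v).val = _
        rw [Fin.val_rev]
        omega
      apply Fin.val_injective
      simp only [hc₀]
      omega
    have h0 := hd (pathRev n) hpres ⟨0, by omega⟩
    have : ((pathRev n) (⟨0, by omega⟩ : Fin n)).val = n - 1 := by
      show (Fin.rev _).val = n - 1
      simp [Fin.val_rev]
    rw [h0] at this
    simp at this
    omega
  have hmem : m ∈ {t | ∀ k, t ≤ k → ∀ c : Fin n → Fin k,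
      Function.Surjective c → IsDistinguishing (pathGraph n) c} := by
    intro k hk c hsurj α hpres v
    rcases path_aut_cases α with h | h
    · exact h v
    · exfalso
      set g : Fin ((n + 1) / 2) → Fin k := fun j => c ⟨j.val, by have := j.isLt; omega⟩ with hg
      have hgsurj : Function.Surjective g := by
        intro y
        obtain ⟨i, hi⟩ := hsurj y
        have hilt := i.isLt
        by_cases hc : i.val < (n + 1) / 2
        · exact ⟨⟨i.val, hc⟩, by simpa [hg, Fin.eta] using hi⟩
        · refine ⟨⟨n - 1 - i.val, by omega⟩, ?_⟩
          have hαi : α i = ⟨n - 1 - i.val, by omega⟩ := by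
            apply Fin.val_injective
            simpa using h i
          have := hpres i
          rw [hαi] at this
          simpa [hg, this] using hi
      have := Fintype.card_le_of_surjective g hgsurj
      simp only [Fintype.card_fin] at this
      omega
  refine le_antisymm (Nat.sInf_le hmem) (le_csInf ⟨m, hmem⟩ ?_)
  intro t ht
  by_contra hlt
  push_neg at hlt
  have := ht ((n + 1) / 2) (by omega) c₀ hsurj₀
  exact hbad this
end

section
/- For every integer n ≥ 5, the distinguishing threshold of the Kneser graph K(n,2) equals (n² − 3n + 6)/2, i.e., θ(K(n,2)) = (n² − 3n + 6)/2. In particular, the distinguishing threshold of the Petersen graph K(5,2) is 8. -/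
open SimpleGraph

/-!
Every automorphism of `K(n,2)`, `n ≥ 5`, is induced by a permutation `π` of the ground set: the
`n - 1` pairs through a point form an independent set, hence an intersecting family of `2`-sets
with more than three members, and such a family is a star.

If a colouring is preserved by such an automorphism with `π a ≠ a`, then each of the
`n - 2` pairs `{a, x}` with `x ≠ π a` has the colour of its image `{π a, π x}`, which is not of
this form; so all colours already occur off these `n - 2` images, and at most
`C(n,2) - (n - 2)` colours are used. Conversely, a transposition has exactly
`C(n,2) - (n - 2)` orbits on pairs, and colouring by orbits gives a surjective,
non-distinguishing colouring with that many colours.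
-/

open Finset

section Threshold

variable {V : Type*} {G : SimpleGraph V}

lemma theta_eq_add_one {m : ℕ}
    (hdist : ∀ k, m < k → ∀ c : V → Fin k, Function.Surjective c → IsDistinguishing G c)
    (hbad : ∃ c : V → Fin m, Function.Surjective c ∧ ¬IsDistinguishing G c) :
    theta G = m + 1 := by
  have hmem : m + 1 ∈ {t | ∀ k, t ≤ k → ∀ c : V → Fin k, Function.Surjective c →
      IsDistinguishing G c} := fun k hk => hdist k hk
  refine le_antisymm (Nat.sInf_le hmem) (le_csInf ⟨_, hmem⟩ fun t ht => ?_)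
  obtain ⟨c, hc, hnd⟩ := hbad
  by_contra! htm
  exact hnd (ht m (Nat.le_of_lt_succ htm) c hc)

lemma exists_surjective_not_isDistinguishing_of_apply_eq [Finite V] {W : Type*} (β : G ≃g G)
    (hβ : ∃ v, β v ≠ v) {r : V → W} (hr : ∀ v, r (β v) = r v) :
    ∃ c : V → Fin (Nat.card (Set.range r)),
      Function.Surjective c ∧ ¬IsDistinguishing G c := by
  refine ⟨Finite.equivFin _ ∘ Set.rangeFactorization r,
    (Finite.equivFin _).surjective.comp Set.rangeFactorization_surjective, fun hc => ?_⟩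
  obtain ⟨v, hv⟩ := hβ
  refine hv (hc β (fun v => ?_) v)
  simp only [Function.comp_apply, EmbeddingLike.apply_eq_iff_eq]
  exact Subtype.ext (hr v)

lemma Function.Surjective.add_card_le_of_apply_eq [Fintype V] [DecidableEq V] {k : ℕ}
    {c : V → Fin k} (hc : Function.Surjective c) {f : V → V} (hfc : ∀ v, c (f v) = c v)
    {S : Finset V} (hf : Set.InjOn f S) (hS : Disjoint (S.image f) S) :
    k + #S ≤ Fintype.card V := by
  have hsurj : Set.SurjOn c ↑(S.image f)ᶜ ↑(univ : Finset (Fin k)) := by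
    intro y _
    obtain ⟨u, rfl⟩ := hc y
    by_cases hu : u ∈ S.image f
    · obtain ⟨s, hs, rfl⟩ := mem_image.1 hu
      exact ⟨s, by simpa using disjoint_right.1 hS hs, (hfc s).symm⟩
    · exact ⟨u, by simpa using hu, rfl⟩
  have := card_le_card_of_surjOn c hsurj
  rw [card_univ, Fintype.card_fin, card_compl, card_image_of_injOn hf] at this
  have : #S ≤ Fintype.card V := card_le_univ S
  omega

end Threshold

namespace Finset

variable {α : Type*} [DecidableEq α] {s : Finset α} {p u : α}

lemma exists_eq_pair_of_card_eq_two (hs : #s = 2) (hp : p ∈ s) :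
    ∃ u, u ≠ p ∧ s = {p, u} := by
  obtain ⟨x, y, hxy, rfl⟩ := card_eq_two.1 hs
  rcases mem_insert.1 hp with rfl | hp
  · exact ⟨y, hxy.symm, rfl⟩
  · rw [mem_singleton.1 hp]; exact ⟨x, hxy, pair_comm _ _⟩

lemma eq_pair_of_card_eq_two (hs : #s = 2) (hp : p ∈ s) (hu : u ∈ s) (hpu : p ≠ u) :
    s = {p, u} :=
  (eq_of_subset_of_card_le (insert_subset hp (singleton_subset_iff.2 hu))
    (by rw [hs, card_pair hpu])).symm

lemma mem_of_not_disjoint_pair {t : Finset α} (h : ¬Disjoint {p, u} t) (hp : p ∉ t) :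
    u ∈ t := by
  simpa [disjoint_insert_left, hp] using h

lemma _root_.Set.Intersecting.exists_forall_mem_of_card_eq_two {F : Finset (Finset α)}
    (hF : (F : Set (Finset α)).Intersecting) (h2 : ∀ s ∈ F, #s = 2) (h4 : 3 < #F) :
    ∃ p, ∀ s ∈ F, p ∈ s := by
  obtain ⟨A, hA, B, hB, hAB⟩ := one_lt_card.1 (by omega : 1 < #F)
  obtain ⟨p, hpA, hpB⟩ := not_disjoint_iff.1 (hF hA hB)
  refine ⟨p, fun C hC => by_contra fun hpC => ?_⟩
  obtain ⟨u, -, rfl⟩ := exists_eq_pair_of_card_eq_two (h2 A hA) hpA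
  obtain ⟨v, -, rfl⟩ := exists_eq_pair_of_card_eq_two (h2 B hB) hpB
  have huv : u ≠ v := by rintro rfl; exact hAB rfl
  have hoff : ∀ D ∈ F, p ∉ D → D = {u, v} := fun D hD hpD =>
    eq_pair_of_card_eq_two (h2 D hD) (mem_of_not_disjoint_pair (hF hA hD) hpD)
      (mem_of_not_disjoint_pair (hF hB hD) hpD) huv
  have hpuv : p ∉ ({u, v} : Finset α) := hoff C hC hpC ▸ hpC
  have hsub : F ⊆ {{p, u}, {p, v}, {u, v}} := by
    intro D hD
    by_cases hpD : p ∈ D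
    · obtain ⟨w, -, rfl⟩ := exists_eq_pair_of_card_eq_two (h2 D hD) hpD
      have hw := mem_of_not_disjoint_pair (hoff C hC hpC ▸ hF hD hC) hpuv
      rcases mem_insert.1 hw with rfl | hw
      · simp
      · simp [mem_singleton.1 hw]
    · simp [hoff D hD hpD]
  have := (card_le_card hsub).trans card_le_three
  omega

end Finset

lemma Nat.choose_two_sub_sub_two_add_one {n : ℕ} (hn : 3 ≤ n) :
    n.choose 2 - (n - 2) + 1 = (n ^ 2 - 3 * n + 6) / 2 := by
  obtain ⟨m, rfl⟩ := Nat.exists_eq_add_of_le' hn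
  have h1 : (m + 3) * (m + 3 - 1) = m * m + 5 * m + 6 := by
    rw [Nat.add_sub_assoc (by norm_num)]
    ring
  have h2 : (m + 3) ^ 2 = m * m + 6 * m + 9 := by ring
  rw [Nat.choose_two_right, h1, h2]
  omega

namespace kneserGraph2

variable {n : ℕ}

lemma card_filter_mem_disjoint {a : Fin n} {B : Finset (Fin n)} (ha : a ∉ B) :
    #{s : {s : Finset (Fin n) // #s = 2} | a ∈ s.1 ∧ Disjoint s.1 B} = n - (#B + 1) := by
  have hcompl : #(insert a B)ᶜ = n - (#B + 1) := by
    rw [card_compl, card_insert_of_notMem ha, Fintype.card_fin]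
  refine (card_bij (fun x hx => ⟨{a, x}, card_pair (by rintro rfl; simp at hx)⟩)
    ?_ ?_ ?_).symm.trans hcompl
  · intro x hx
    simp only [mem_compl, mem_insert, not_or] at hx
    simp [ha, hx.2]
  · intro x hx y hy hxy
    simp only [mem_compl, mem_insert, not_or] at hx
    have hpair : ({a, x} : Finset (Fin n)) = {a, y} := congrArg Subtype.val hxy
    have hx' : x ∈ ({a, y} : Finset (Fin n)) := hpair ▸ by simp
    simpa [hx.1] using hx'
  · rintro ⟨s, hs⟩ hsB
    simp only [mem_filter, mem_univ, true_and] at hsB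
    obtain ⟨u, hua, rfl⟩ := exists_eq_pair_of_card_eq_two hs hsB.1
    exact ⟨u, by simpa [hua] using disjoint_left.1 hsB.2 (by simp), rfl⟩

def permIso (π : Equiv.Perm (Fin n)) : kneserGraph2 n ≃g kneserGraph2 n where
  toEquiv := π.finsetCongr.subtypeEquiv fun s => by simp [Equiv.finsetCongr_apply]
  map_rel_iff' := disjoint_map _

@[simp]
lemma permIso_apply_coe (π : Equiv.Perm (Fin n)) (s : {s : Finset (Fin n) // #s = 2}) :
    (permIso π s).1 = s.1.map π.toEmbedding :=
  rfl

lemma exists_forall_mem_apply (hn : 5 ≤ n) (α : kneserGraph2 n ≃g kneserGraph2 n) (i : Fin n) :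
    ∃ j, ∀ s, i ∈ s.1 → j ∈ (α s).1 := by
  set star : Finset {s : Finset (Fin n) // #s = 2} := {s | i ∈ s.1}
  set F := star.image fun s => (α s).1
  have hF : (F : Set (Finset (Fin n))).Intersecting := by
    simp only [F, star, coe_image, coe_filter, Set.Intersecting, Set.mem_image, Set.mem_ofPred_eq,
      mem_univ, true_and, forall_exists_index, and_imp, forall_apply_eq_imp_iff₂]
    intro s hs t ht hst
    exact disjoint_left.1 (α.map_adj_iff.1 hst) hs ht
  have h2 : ∀ s ∈ F, #s = 2 := by
    simp only [F, mem_image]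
    rintro _ ⟨s, -, rfl⟩
    exact (α s).2
  have hF4 : 3 < #F := by
    have hstar : #star = n - 1 := by simpa using card_filter_mem_disjoint (notMem_empty i)
    have hinj : Function.Injective fun s => (α s).1 := Subtype.val_injective.comp α.injective
    rw [card_image_of_injective _ hinj]
    omega
  obtain ⟨j, hj⟩ := hF.exists_forall_mem_of_card_eq_two h2 hF4
  exact ⟨j, fun s hs => hj _ (mem_image_of_mem _ (by simpa [star]))⟩

lemma exists_eq_permIso (hn : 5 ≤ n) (α : kneserGraph2 n ≃g kneserGraph2 n) :
    ∃ π, α = permIso π := by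
  choose f hf using exists_forall_mem_apply hn α
  have hinj : Function.Injective f := by
    intro i j hij
    by_contra hij'
    obtain ⟨k, -, hk⟩ := exists_mem_notMem_of_card_lt_card (s := {i, j}) (t := univ)
      (by rw [card_univ, Fintype.card_fin]; exact card_le_two.trans_lt (by omega))
    obtain ⟨l, -, hl⟩ := exists_mem_notMem_of_card_lt_card (s := {i, j, k}) (t := univ)
      (by rw [card_univ, Fintype.card_fin]; exact card_le_three.trans_lt (by omega))
    simp only [mem_insert, mem_singleton, not_or] at hk hl
    let s : {s : Finset (Fin n) // #s = 2} := ⟨{i, k}, card_pair (Ne.symm hk.1)⟩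
    let t : {s : Finset (Fin n) // #s = 2} := ⟨{j, l}, card_pair (Ne.symm hl.2.1)⟩
    have hst : (kneserGraph2 n).Adj s t := by
      simp only [kneserGraph2, s, t, disjoint_insert_left, disjoint_insert_right,
        disjoint_singleton, mem_insert, mem_singleton, not_or]
      exact ⟨⟨Ne.symm hij', Ne.symm hk.2⟩, Ne.symm hl.1, Ne.symm hl.2.2⟩
    exact disjoint_left.1 (α.map_adj_iff.2 hst) (hij ▸ hf i s (by simp [s]))
      (hf j t (by simp [t]))
  refine ⟨Equiv.ofBijective f hinj.bijective_of_finite, RelIso.ext fun s => Subtype.ext ?_⟩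
  obtain ⟨a, b, hab, hs⟩ := card_eq_two.1 s.2
  have hαs := eq_pair_of_card_eq_two (α s).2 (hf a s (by simp [hs])) (hf b s (by simp [hs]))
    (hinj.ne hab)
  simp [hαs, hs]

lemma isDistinguishing_of_surjective (hn : 5 ≤ n) {k : ℕ} (hk : n.choose 2 - (n - 2) < k)
    {c : {s : Finset (Fin n) // #s = 2} → Fin k} (hc : Function.Surjective c) :
    IsDistinguishing (kneserGraph2 n) c := by
  intro α hα
  obtain ⟨π, rfl⟩ := exists_eq_permIso hn α
  by_contra! hmoved
  obtain ⟨a, ha⟩ : ∃ a, π a ≠ a := by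
    by_contra! hπ
    obtain ⟨v, hv⟩ := hmoved
    exact hv (Subtype.ext (by simp [map_perm (σ := π) (by simp [hπ])]))
  -- `permIso π` moves each pair of `S` onto a pair through `π a`, i.e. off `S`
  set S : Finset {s : Finset (Fin n) // #s = 2} := {s | a ∈ s.1 ∧ π a ∉ s.1}
  have hS : #S = n - 2 := by
    simpa using card_filter_mem_disjoint (B := {π a}) (by simpa using ha.symm)
  have hdisj : Disjoint (S.image (permIso π)) S := by
    refine Finset.disjoint_left.2 ?_
    simp only [S, mem_image, mem_filter, mem_univ, true_and]
    rintro _ ⟨s, hs, rfl⟩ h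
    exact h.2 (by simpa using hs.1)
  have := hc.add_card_le_of_apply_eq hα (permIso π).injective.injOn hdisj
  rw [hS, Fintype.card_finset_len, Fintype.card_fin] at this
  omega

lemma exists_surjective_not_isDistinguishing (hn : 3 ≤ n) :
    ∃ c : {s : Finset (Fin n) // #s = 2} → Fin (n.choose 2 - (n - 2)),
      Function.Surjective c ∧ ¬IsDistinguishing (kneserGraph2 n) c := by
  obtain ⟨a, b, hab⟩ : ∃ a b : Fin n, a ≠ b :=
    ⟨⟨0, by omega⟩, ⟨1, by omega⟩, by simp [Fin.ext_iff]⟩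
  set β := permIso (Equiv.swap a b)
  have hmem : ∀ s x, x ∈ (β s).1 ↔ Equiv.swap a b x ∈ s.1 := by simp [β, mem_map_equiv]
  have hββ : ∀ s, β (β s) = s := fun s => Subtype.ext (by ext x; simp [hmem])
  have hfix : ∀ s, (a ∈ s.1 ↔ b ∈ s.1) → β s = s := by
    intro s h
    refine Subtype.ext (Finset.ext fun x => ?_)
    rw [hmem]
    rcases eq_or_ne x a with rfl | hxa
    · simp [h]
    rcases eq_or_ne x b with rfl | hxb
    · simp [h]
    · rw [Equiv.swap_apply_of_ne_of_ne hxa hxb]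
  -- `β` swaps `{a, x}` with `{b, x}` and fixes every other pair; `r` picks the member of each
  -- `β`-orbit outside `moved`, so it is `β`-invariant with range `movedᶜ`
  set moved : Finset {s : Finset (Fin n) // #s = 2} := {s | b ∈ s.1 ∧ a ∉ s.1}
  let r s := if s ∈ moved then β s else s
  have hr : ∀ s, r (β s) = r s := by
    intro s
    by_cases ha : a ∈ s.1 <;> by_cases hb : b ∈ s.1
    all_goals simp [r, moved, hmem, ha, hb, hββ, hfix]
  have hrange : Set.range r = ↑movedᶜ := by
    ext s
    simp only [Set.mem_range, coe_compl, Set.mem_compl_iff, mem_coe]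
    constructor
    · rintro ⟨s, rfl⟩
      by_cases hs : s ∈ moved <;> simp_all [r, moved]
    · exact fun hs => ⟨s, if_neg hs⟩
  have hcard : #moved = n - 2 := by
    simpa [moved, and_comm] using card_filter_mem_disjoint (B := {a}) (by simpa using hab.symm)
  obtain ⟨s, hs⟩ : moved.Nonempty := card_pos.1 (by omega)
  simp only [moved, mem_filter, mem_univ, true_and] at hs
  have hβs : β s ≠ s := fun h => hs.2 (h ▸ (hmem s a).2 (by simpa using hs.1))
  have := exists_surjective_not_isDistinguishing_of_apply_eq β ⟨s, hβs⟩ hr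
  rwa [hrange, Nat.card_coe_set_eq, Set.ncard_coe_finset, card_compl, hcard,
    Fintype.card_finset_len, Fintype.card_fin] at this

theorem theta_eq (hn : 5 ≤ n) : theta (kneserGraph2 n) = (n ^ 2 - 3 * n + 6) / 2 := by
  rw [← Nat.choose_two_sub_sub_two_add_one (by omega)]
  exact theta_eq_add_one (fun _ hk _ hc => isDistinguishing_of_surjective hn hk hc)
    (exists_surjective_not_isDistinguishing (by omega))

end kneserGraph2

theorem theta_kneserGraph :
    (∀ n : ℕ, 5 ≤ n → theta (kneserGraph2 n) = (n ^ 2 - 3 * n + 6) / 2) ∧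
    theta (kneserGraph2 5) = 8 :=
  ⟨fun _ => kneserGraph2.theta_eq, kneserGraph2.theta_eq le_rfl⟩
end

section
/- For every integer n ≥ 3 and every integer k ≥ ⌊n/2⌋ + 2, the number of non-equivalent distinguishing colorings of the cycle C_n using exactly k colors equals k!·S(n,k)/(2n), i.e., φ_k(C_n) = k!·S(n,k)/(2n). -/
open SimpleGraph

section Helpers
open Function
open Fin.NatCast Fin.CommRing

noncomputable def NSurj (n k : ℕ) : ℕ := Nat.card {f : Fin n → Fin k // Surjective f}

def surjCongrRight {A B B' : Type*} (e : B ≃ B') :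
    {f : A → B // Surjective f} ≃ {f : A → B' // Surjective f} where
  toFun f := ⟨e ∘ f.1, e.surjective.comp f.2⟩
  invFun f := ⟨e.symm ∘ f.1, e.symm.surjective.comp f.2⟩
  left_inv f := by ext x; simp
  right_inv f := by ext x; simp

lemma NSurj_zero_zero : NSurj 0 0 = 1 := by
  have : Unique {f : Fin 0 → Fin 0 // Surjective f} :=
    ⟨⟨⟨finZeroElim, fun y => y.elim0⟩⟩, fun f => Subtype.ext (funext fun i => i.elim0)⟩
  exact Nat.card_unique

lemma NSurj_zero_succ (k : ℕ) : NSurj 0 (k + 1) = 0 := by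
  have : IsEmpty {f : Fin 0 → Fin (k+1) // Surjective f} := by
    constructor; rintro ⟨f, hf⟩
    obtain ⟨i, -⟩ := hf 0
    exact i.elim0
  exact Nat.card_of_isEmpty

lemma NSurj_succ_zero (n : ℕ) : NSurj (n + 1) 0 = 0 := by
  have : IsEmpty {f : Fin (n+1) → Fin 0 // Surjective f} := by
    constructor; rintro ⟨f, -⟩
    exact (f 0).elim0
  exact Nat.card_of_isEmpty

section Rec
variable {n k : ℕ} (v : Fin (k + 1))

lemma surj_cons_iff (g : Fin n → Fin (k+1)) :
    Surjective (Fin.cons v g : Fin (n+1) → Fin (k+1)) ↔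
      Surjective g ∨ (∀ y, (∃ i, g i = y) ↔ y ≠ v) := by
  have hsucc : ∀ (i : Fin n), (Fin.cons v g : Fin (n+1) → Fin (k+1)) i.succ = g i :=
    fun i => Fin.cons_succ (α := fun _ => Fin (k+1)) v g i
  have hzero : (Fin.cons v g : Fin (n+1) → Fin (k+1)) 0 = v := Fin.cons_zero (α := fun _ => Fin (k+1)) v g
  constructor
  · intro h
    have hsplit : ∀ z : Fin (k+1), z = v ∨ ∃ i, g i = z := by
      intro z
      obtain ⟨j, hj⟩ := h z
      rcases Fin.eq_zero_or_eq_succ j with rfl | ⟨i, rfl⟩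
      · left; rw [hzero] at hj; exact hj.symm
      · right; exact ⟨i, by rwa [hsucc] at hj⟩
    by_cases hP : Surjective g
    · exact .inl hP
    refine .inr fun y => ⟨?_, ?_⟩
    · rintro ⟨i, hi⟩ hyv
      subst hyv
      exact hP fun z => (hsplit z).elim (fun hz => ⟨i, by rw [hi, hz]⟩) id
    · intro hy
      exact (hsplit y).elim (fun hz => absurd hz hy) id
  · rintro (h | h) y
    · obtain ⟨i, rfl⟩ := h y
      exact ⟨i.succ, hsucc i⟩
    · by_cases hy : y = v
      · exact ⟨0, by rw [hzero, hy]⟩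
      · obtain ⟨i, rfl⟩ := (h y).mpr hy
        exact ⟨i.succ, hsucc i⟩

def exactMissEquiv :
    {g : Fin n → Fin (k+1) // ∀ y, (∃ i, g i = y) ↔ y ≠ v} ≃
      {h : Fin n → {x : Fin (k+1) // x ≠ v} // Surjective h} where
  toFun g := ⟨fun i => ⟨g.1 i, (g.2 (g.1 i)).mp ⟨i, rfl⟩⟩, by
    rintro ⟨y, hy⟩
    obtain ⟨i, hi⟩ := (g.2 y).mpr hy
    exact ⟨i, Subtype.ext hi⟩⟩
  invFun h := ⟨fun i => (h.1 i).1, fun y =>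
    ⟨fun ⟨i, hi⟩ => hi ▸ (h.1 i).2, fun hy => by
      obtain ⟨i, hi⟩ := h.2 ⟨y, hy⟩
      exact ⟨i, congrArg Subtype.val hi⟩⟩⟩
  left_inv g := by ext i; rfl
  right_inv h := by ext i; rfl

noncomputable def neEquivFin : {x : Fin (k+1) // x ≠ v} ≃ Fin k := by
  apply Fintype.equivFinOfCardEq
  rw [Fintype.card_subtype_compl, Fintype.card_fin, Fintype.card_subtype_eq]
  omega

noncomputable def consFiberEquiv :
    {g : Fin n → Fin (k+1) // Surjective (Fin.cons v g : Fin (n+1) → Fin (k+1))} ≃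
      {g : Fin n → Fin (k+1) // Surjective g} ⊕ {g : Fin n → Fin k // Surjective g} := by
  classical
  refine (Equiv.subtypeEquivRight (surj_cons_iff v)).trans ?_
  refine (subtypeOrEquiv _ _ ?_).trans ?_
  · refine Pi.disjoint_iff.mpr fun g => Prop.disjoint_iff.mpr ?_
    rintro ⟨hP, hQ⟩
    obtain ⟨i, hi⟩ := hP v
    exact ((hQ v).mp ⟨i, hi⟩) rfl
  · exact Equiv.sumCongr (Equiv.refl _)
      ((exactMissEquiv v).trans (surjCongrRight (neEquivFin v)))

lemma NSurj_succ_succ : NSurj (n + 1) (k + 1) = (k + 1) * (NSurj n (k + 1) + NSurj n k) := by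
  have e1 : {p : Fin (k+1) × (Fin n → Fin (k+1)) //
      Surjective (Fin.cons p.1 p.2 : Fin (n+1) → Fin (k+1))} ≃
      {f : Fin (n+1) → Fin (k+1) // Surjective f} :=
    Equiv.subtypeEquiv (Fin.consEquiv (fun _ => Fin (k+1))) (fun p => Iff.rfl)
  have e2 : {p : Fin (k+1) × (Fin n → Fin (k+1)) //
      Surjective (Fin.cons p.1 p.2 : Fin (n+1) → Fin (k+1))} ≃
      Σ v : Fin (k+1), {g : Fin n → Fin (k+1) //
        Surjective (Fin.cons v g : Fin (n+1) → Fin (k+1))} :=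
    Equiv.subtypeProdEquivSigmaSubtype
      (fun (v : Fin (k+1)) (g : Fin n → Fin (k+1)) => Surjective (Fin.cons v g : Fin (n+1) → Fin (k+1)))
  have e3 := ((e1.symm.trans e2).trans
    (Equiv.sigmaCongrRight (fun v => consFiberEquiv (n := n) (k := k) v))).trans
    (Equiv.sigmaEquivProd _ _)
  rw [NSurj, Nat.card_congr e3, Nat.card_prod, Nat.card_sum, Nat.card_eq_fintype_card,
    Fintype.card_fin]
  rfl
end Rec

lemma NSurj_eq (n : ℕ) : ∀ k, NSurj n k = k.factorial * stirling2 n k := by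
  induction n with
  | zero =>
    rintro (_ | k)
    · rw [NSurj_zero_zero]; rfl
    · rw [NSurj_zero_succ]; rw [show stirling2 0 (k+1) = 0 from rfl, Nat.mul_zero]
  | succ n ih =>
    rintro (_ | k)
    · rw [NSurj_succ_zero]; rfl
    · rw [NSurj_succ_succ, ih (k+1), ih k,
        show stirling2 (n+1) (k+1) = (k + 1) * stirling2 n (k + 1) + stirling2 n k from rfl,
        Nat.factorial_succ]
      ring

lemma two_ne_zero_fin (m : ℕ) : (2 : Fin (m+3)) ≠ 0 := by
  intro h
  have h2 : ((2 : ℕ) : Fin (m+3)) = 0 := by exact_mod_cast h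
  have := Fin.natCast_eq_zero.mp h2
  have := Nat.le_of_dvd (by norm_num) this
  omega

lemma cycle_adj {m : ℕ} {u v : Fin (m+3)} :
    (cycleGraph (m+3)).Adj u v ↔ u - v = 1 ∨ v - u = 1 :=
  cycleGraph_adj (n := m+1)

lemma cycle_adj_succ {m : ℕ} (u : Fin (m+3)) : (cycleGraph (m+3)).Adj u (u + 1) := by
  rw [cycle_adj]; right; ring

lemma cycle_aut_form {m : ℕ} (α : cycleGraph (m+3) ≃g cycleGraph (m+3)) :
    (∀ x, α x = α 0 + x) ∨ (∀ x, α x = α 0 - x) := by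
  set a := α 0 with ha
  have key : ∀ s : Fin (m+3), α 1 = a + s →
      ∀ p : ℕ, α ((p : Fin (m+3)) + 1) = α (p : Fin (m+3)) + s →
      (∀ q : ℕ, α (q : Fin (m+3)) = a + s * q) → True := fun _ _ _ _ _ => trivial
  -- main two-step induction
  have main : ∀ s : Fin (m+3), α 1 = a + s → (s = 1 ∨ s = -1) →
      ∀ p : ℕ, α (p : Fin (m+3)) = a + s * p := by
    intro s hs hs1 p
    induction p using Nat.twoStepInduction with
    | zero => simpa using ha.symm
    | one => simpa using hs
    | more p ih1 ih2 =>
      have hadj : (cycleGraph (m+3)).Adj (α ((p+1 : ℕ) : Fin (m+3)))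
          (α ((p+2 : ℕ) : Fin (m+3))) := by
        rw [α.map_adj_iff]
        rw [cycle_adj]
        right
        push_cast
        ring
      rw [cycle_adj] at hadj
      have hne : α ((p+2 : ℕ) : Fin (m+3)) ≠ α ((p : ℕ) : Fin (m+3)) := by
        intro h
        have := α.toEquiv.injective h
        have h2 : (2 : Fin (m+3)) = 0 := by
          have : ((p : Fin (m+3)) + 2) = ((p : Fin (m+3)) + 0) := by
            push_cast at this
            rw [add_zero]
            linear_combination this
          exact add_left_cancel this
        exact two_ne_zero_fin m h2
      rcases hs1 with rfl | rfl
      · rcases hadj with h | h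
        · exfalso
          apply hne
          have : α ((p+2:ℕ) : Fin (m+3)) = α ((p+1:ℕ) : Fin (m+3)) - 1 := by
            linear_combination -h
          rw [this, ih2, ih1]
          push_cast
          ring
        · have : α ((p+2:ℕ) : Fin (m+3)) = α ((p+1:ℕ) : Fin (m+3)) + 1 := by
            linear_combination h
          rw [this, ih2]
          push_cast
          ring
      · rcases hadj with h | h
        · have : α ((p+2:ℕ) : Fin (m+3)) = α ((p+1:ℕ) : Fin (m+3)) - 1 := by
            linear_combination -h
          rw [this, ih2]
          push_cast
          ring
        · exfalso
          apply hne
          have : α ((p+2:ℕ) : Fin (m+3)) = α ((p+1:ℕ) : Fin (m+3)) + 1 := by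
            linear_combination h
          rw [this, ih2, ih1]
          push_cast
          ring
  have hadj01 : (cycleGraph (m+3)).Adj (α 0) (α 1) := by
    rw [α.map_adj_iff]
    exact by simpa using cycle_adj_succ (0 : Fin (m+3))
  rw [cycle_adj] at hadj01
  have hx : ∀ x : Fin (m+3), ∃ p : ℕ, (p : Fin (m+3)) = x := fun x =>
    ⟨x.val, Fin.cast_val_eq_self x⟩
  rcases hadj01 with h | h
  · -- a - α 1 = 1, so α 1 = a - 1
    right
    have h1 : α 1 = a + (-1) := by linear_combination -h
    intro x
    obtain ⟨p, rfl⟩ := hx x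
    have := main (-1) h1 (Or.inr rfl) p
    rw [this]; ring
  · -- α 1 - a = 1
    left
    have h1 : α 1 = a + 1 := by linear_combination h
    intro x
    obtain ⟨p, rfl⟩ := hx x
    have := main 1 h1 (Or.inl rfl) p
    rw [this]; ring

def rotAut (m : ℕ) (a : Fin (m+3)) : cycleGraph (m+3) ≃g cycleGraph (m+3) where
  toEquiv := Equiv.addLeft a
  map_rel_iff' := by
    intro u v
    simp only [Equiv.coe_addLeft]
    rw [cycle_adj, cycle_adj]
    constructor
    · rintro (h | h)
      · left; linear_combination h
      · right; linear_combination h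
    · rintro (h | h)
      · left; linear_combination h
      · right; linear_combination h

def reflAut (m : ℕ) (a : Fin (m+3)) : cycleGraph (m+3) ≃g cycleGraph (m+3) where
  toEquiv := Equiv.subLeft a
  map_rel_iff' := by
    intro u v
    simp only [Equiv.subLeft_apply]
    rw [cycle_adj, cycle_adj]
    constructor
    · rintro (h | h)
      · right; linear_combination h
      · left; linear_combination h
    · rintro (h | h)
      · right; linear_combination h
      · left; linear_combination h

lemma sub_one_ne_add_one (m : ℕ) (a : Fin (m+3)) : a - 1 ≠ a + 1 := by
  intro h
  apply two_ne_zero_fin m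
  linear_combination -h

noncomputable def autEquiv (m : ℕ) :
    (cycleGraph (m+3) ≃g cycleGraph (m+3)) ≃ Fin (m+3) × Bool where
  toFun α := (α 0, decide (α 1 = α 0 + 1))
  invFun p := if p.2 then rotAut m p.1 else reflAut m p.1
  left_inv α := by
    rcases cycle_aut_form α with h | h
    · have h1 : α 1 = α 0 + 1 := by rw [h 1]
      show (if decide (α 1 = α 0 + 1) = true then rotAut m (α 0) else reflAut m (α 0)) = α
      rw [if_pos (by simp [h1])]
      exact RelIso.ext fun x => ((h x).symm)
    · have h1 : α 1 = α 0 - 1 := by rw [h 1]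
      have hne : ¬ (α 1 = α 0 + 1) := by rw [h1]; exact sub_one_ne_add_one m (α 0)
      show (if decide (α 1 = α 0 + 1) = true then rotAut m (α 0) else reflAut m (α 0)) = α
      rw [if_neg (by simp [hne])]
      exact RelIso.ext fun x => ((h x).symm)
  right_inv p := by
    obtain ⟨a, b⟩ := p
    cases b
    · show ((reflAut m a) 0, decide ((reflAut m a) 1 = (reflAut m a) 0 + 1)) = (a, false)
      have h0 : reflAut m a 0 = a := by show a - 0 = a; ring
      have h1 : reflAut m a 1 = a - 1 := rfl
      rw [Prod.mk.injEq, h0, h1]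
      exact ⟨rfl, by simp [sub_one_ne_add_one m a]⟩
    · show ((rotAut m a) 0, decide ((rotAut m a) 1 = (rotAut m a) 0 + 1)) = (a, true)
      have h0 : rotAut m a 0 = a := by show a + 0 = a; ring
      have h1 : rotAut m a 1 = a + 1 := rfl
      rw [Prod.mk.injEq, h0, h1]
      exact ⟨rfl, by simp⟩

lemma card_aut (m : ℕ) : Nat.card (cycleGraph (m+3) ≃g cycleGraph (m+3)) = 2 * (m+3) := by
  rw [Nat.card_congr (autEquiv m), Nat.card_prod, Nat.card_eq_fintype_card, Fintype.card_fin,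
    Nat.card_eq_fintype_card, Fintype.card_bool]
  ring

lemma surj_isDist {m k : ℕ} (hk : (m+3)/2 + 2 ≤ k) (c : Fin (m+3) → Fin k)
    (hc : Surjective c) : IsDistinguishing (cycleGraph (m+3)) c := by
  classical
  intro α hα
  rcases cycle_aut_form α with h | h
  · set a := α 0 with ha0
    by_cases ha : a = 0
    · intro v; rw [h v, ha, zero_add]
    · exfalso
      have hinv : ∀ x, c (x + a) = c x := fun x => by
        have := hα x; rw [h x, add_comm] at this; exact this
      have hmul : ∀ (t : ℕ) (x : Fin (m+3)), c (x + (t : Fin (m+3)) * a) = c x := by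
        intro t
        induction t with
        | zero => simp
        | succ t ih =>
          intro x
          have he : x + ((t+1 : ℕ) : Fin (m+3)) * a = (x + (t : Fin (m+3)) * a) + a := by
            push_cast; ring
          rw [he, hinv, ih]
      have hmulF : ∀ (b : Fin (m+3)) (x : Fin (m+3)), c (x + b * a) = c x := by
        intro b x
        have := hmul b.val x
        rwa [Fin.cast_val_eq_self] at this
      set d := Nat.gcd (m+3) a.val with hd
      have hdpos : 0 < d := Nat.pos_of_ne_zero (by
        rw [hd, Ne, Nat.gcd_eq_zero_iff]; omega)
      have hdcast : (d : Fin (m+3)) = a * ((Nat.gcdB (m+3) a.val : ℤ) : Fin (m+3)) := by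
        have hb := Nat.gcd_eq_gcd_ab (m+3) a.val
        have hcast := congrArg (fun z : ℤ => (z : Fin (m+3))) hb
        push_cast at hcast
        have hz : ((m : Fin (m+3)) + 3) = 0 := by
          have hzz := Fin.natCast_self (m+3)
          push_cast at hzz
          exact hzz
        rw [hz, zero_mul, zero_add] at hcast
        exact hcast
      have hdinv : ∀ x, c (x + (d : Fin (m+3))) = c x := fun x => by
        rw [hdcast, mul_comm]
        exact hmulF _ x
      have hdmul : ∀ (t : ℕ) (x : Fin (m+3)), c (x + ((d * t : ℕ) : Fin (m+3))) = c x := by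
        intro t
        induction t with
        | zero => simp
        | succ t ih =>
          intro x
          have he : x + ((d * (t+1) : ℕ) : Fin (m+3)) =
              (x + ((d * t : ℕ) : Fin (m+3))) + (d : Fin (m+3)) := by
            push_cast; ring
          rw [he, hdinv, ih]
      have hmod : ∀ x : Fin (m+3), c x = c ((x.val % d : ℕ) : Fin (m+3)) := by
        intro x
        conv_lhs => rw [← Fin.cast_val_eq_self x, ← Nat.mod_add_div x.val d, Nat.cast_add]
        exact hdmul (x.val / d) _
      have hkd : k ≤ d := by
        have hsurj : Surjective (fun r : Fin d => c (((r.val : ℕ) : Fin (m+3)))) := by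
          intro y
          obtain ⟨x, rfl⟩ := hc y
          exact ⟨⟨x.val % d, Nat.mod_lt _ hdpos⟩, (hmod x).symm⟩
        have := Fintype.card_le_of_surjective _ hsurj
        simpa using this
      have hdn : d ∣ (m+3) := Nat.gcd_dvd_left _ _
      have haval : a.val ≠ 0 := fun h0 => ha (Fin.val_injective (by
        rw [h0, Fin.val_zero]))
      have hdne : d ≠ m+3 := by
        intro hdd
        have hle : d ≤ a.val :=
          Nat.le_of_dvd (Nat.pos_of_ne_zero haval) (Nat.gcd_dvd_right (m+3) a.val)
        have := a.isLt
        omega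
      obtain ⟨u, hu⟩ := hdn
      have hu2 : 2 ≤ u := by
        rcases u with _ | _ | u
        · omega
        · omega
        · omega
      have h2d : 2 * d ≤ m + 3 := by
        calc 2 * d = d * 2 := by ring
        _ ≤ d * u := Nat.mul_le_mul_left d hu2
        _ = m + 3 := hu.symm
      omega
  · exfalso
    set a := α 0 with ha0
    have hinv : ∀ x, c (a - x) = c x := fun x => by
      have := hα x; rwa [h x] at this
    set g : Fin (m+3) → Fin (m+3) := fun x => min x (a - x) with hg
    have hgc : ∀ x, c (g x) = c x := by
      intro x
      rcases min_choice x (a - x) with hmin | hmin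
      · show c (min x (a-x)) = c x
        rw [hmin]
      · show c (min x (a-x)) = c x
        rw [hmin, hinv]
    set S : Finset (Fin (m+3)) := Finset.image g Finset.univ with hS
    have hmem : ∀ y ∈ S, y ≤ a - y := by
      intro y hy
      rw [hS, Finset.mem_image] at hy
      obtain ⟨x, -, rfl⟩ := hy
      rcases min_choice x (a - x) with hmin | hmin
      · show g x ≤ a - g x
        have hx : g x = x := hmin
        rw [hx]
        exact min_eq_left_iff.mp hmin
      · show g x ≤ a - g x
        have hx : g x = a - x := hmin
        rw [hx, show a - (a - x) = x from by ring]
        exact min_eq_right_iff.mp hmin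
    have hks : k ≤ S.card := by
      have hle : (Finset.univ : Finset (Fin k)).card ≤ S.card := by
        apply Finset.card_le_card_of_surjOn c
        intro y _
        obtain ⟨x, rfl⟩ := hc y
        exact ⟨g x, Finset.mem_coe.mpr (Finset.mem_image.mpr ⟨x, Finset.mem_univ x, rfl⟩), hgc x⟩
      simpa using hle
    set F : Finset (Fin (m+3)) := Finset.univ.filter (fun y => a - y = y) with hF
    have hFcard : F.card ≤ 2 := by
      rcases Finset.eq_empty_or_nonempty F with hFe | ⟨y₀, hy₀⟩
      · rw [hFe]; simp
      · have hy₀' : a - y₀ = y₀ := (Finset.mem_filter.mp hy₀).2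
        have hsub : F ⊆ {y₀, y₀ + (((m+3)/2 : ℕ) : Fin (m+3))} := by
          intro y hy
          have hy' : a - y = y := (Finset.mem_filter.mp hy).2
          have hsum : y + y = y₀ + y₀ := by linear_combination hy₀' - hy'
          have h2t : (y - y₀) + (y - y₀) = 0 := by linear_combination hsum
          have hval : ((y - y₀).val + (y - y₀).val) % (m+3) = 0 := by
            have hv := congrArg Fin.val h2t
            rwa [Fin.val_add, Fin.val_zero] at hv
          have hlt := (y - y₀).isLt
          have hcases : (y - y₀).val = 0 ∨ (y - y₀).val + (y - y₀).val = m+3 := by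
            obtain ⟨w, hw⟩ := Nat.dvd_of_mod_eq_zero hval
            have hw2 : w < 2 := Nat.lt_of_mul_lt_mul_left (by rw [← hw]; omega)
            interval_cases w
            · left; omega
            · right; omega
          rcases hcases with h0 | hhalf
          · have hz : y - y₀ = 0 := Fin.val_injective (by rw [h0, Fin.val_zero])
            have : y = y₀ := by linear_combination hz
            simp [this]
          · have hval2 : (y - y₀).val = (m+3)/2 := by omega
            have hz : y - y₀ = (((m+3)/2 : ℕ) : Fin (m+3)) := Fin.val_injective (by
              rw [Fin.val_natCast, Nat.mod_eq_of_lt (by omega), hval2])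
            have : y = y₀ + (((m+3)/2 : ℕ) : Fin (m+3)) := by linear_combination hz
            simp [this]
        calc F.card ≤ _ := Finset.card_le_card hsub
          _ ≤ 2 := (Finset.card_insert_le _ _).trans (by simp)
    have hinjS : (S \ F).card ≤ ((Finset.univ : Finset (Fin (m+3))) \ S).card := by
      apply Finset.card_le_card_of_injOn (fun y => a - y)
      · intro y hy
        rw [Finset.mem_coe, Finset.mem_sdiff] at hy ⊢
        obtain ⟨hyS, hyF⟩ := hy
        refine ⟨Finset.mem_univ _, fun hcon => ?_⟩
        have h1 : y ≤ a - y := hmem y hyS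
        have h2 : a - y ≤ a - (a - y) := hmem _ hcon
        rw [show a - (a - y) = y from by ring] at h2
        have hEq : a - y = y := le_antisymm h2 h1
        exact hyF (Finset.mem_filter.mpr ⟨Finset.mem_univ _, hEq⟩)
      · intro x _ y _ hxy
        have : x = y := by
          simp only at hxy
          linear_combination -hxy
        exact this
    have hcount : S.card ≤ (S \ F).card + F.card := Finset.card_le_card_sdiff_add_card
    have husize : ((Finset.univ : Finset (Fin (m+3))) \ S).card = (m+3) - S.card := by
      rw [Finset.card_sdiff_of_subset (Finset.subset_univ S), Finset.card_univ, Fintype.card_fin]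
    have hSle : S.card ≤ m+3 := by
      have := Finset.card_le_card (Finset.subset_univ S)
      simpa using this
    omega

section Count
variable {V : Type*} [Fintype V] (G : SimpleGraph V) (k : ℕ)

private def dsAction : MulAction (G ≃g G)
    {c : V → Fin k // IsDistinguishing G c ∧ Function.Surjective c} where
  smul α c := ⟨fun v => c.1 (α⁻¹ v), by
    refine ⟨?_, ?_⟩
    · intro β hβ v
      have hγ : ∀ w, (α⁻¹ * (β * α)) w = w := by
        apply c.2.1
        intro w
        have hb := hβ (α w)
        simp only at hb
        show c.1 (α⁻¹ (β (α w))) = c.1 w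
        rw [hb, RelIso.inv_apply_self]
      have h2 := hγ (α⁻¹ v)
      have h3 : α⁻¹ (β (α (α⁻¹ v))) = α⁻¹ v := h2
      rw [RelIso.apply_inv_self] at h3
      exact α⁻¹.toEquiv.injective h3
    · intro y
      obtain ⟨x, hx⟩ := c.2.2 y
      exact ⟨α x, by simp only [RelIso.inv_apply_self]; exact hx⟩⟩
  one_smul c := Subtype.ext (funext fun v => by
    show c.1 ((1 : G ≃g G)⁻¹ v) = c.1 v
    rw [inv_one]
    rfl)
  mul_smul α β c := Subtype.ext (funext fun v => by
    show c.1 ((α * β)⁻¹ v) = c.1 (β⁻¹ (α⁻¹ v))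
    rw [mul_inv_rev]
    rfl)

lemma orbit_count :
    Nat.card {c : V → Fin k // IsDistinguishing G c ∧ Function.Surjective c} =
      phi G k * Nat.card (G ≃g G) := by
  classical
  unfold phi
  letI := dsAction G k
  haveI : Finite (G ≃g G) :=
    Finite.of_injective (fun α => (α : V → V)) (fun α β h => RelIso.ext (congrFun h))
  have hsmul : ∀ (α : G ≃g G)
      (c : {c : V → Fin k // IsDistinguishing G c ∧ Function.Surjective c}) (v : V),
      (α • c).1 v = c.1 (α⁻¹ v) := fun _ _ _ => rfl
  have hfree : ∀ (c : {c : V → Fin k // IsDistinguishing G c ∧ Function.Surjective c})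
      (α : G ≃g G), α • c = c → α = 1 := by
    intro c α h
    have h1 : ∀ v, c.1 (α⁻¹ v) = c.1 v := fun v => by
      rw [← hsmul α c v, h]
    have h2 := c.2.1 α⁻¹ h1
    have h3 : α⁻¹ = 1 := RelIso.ext fun v => h2 v
    rwa [inv_eq_one] at h3
  have equivOrbit : ∀ c : {c : V → Fin k // IsDistinguishing G c ∧ Function.Surjective c},
      (G ≃g G) ≃ MulAction.orbit (G ≃g G) c := by
    intro c
    refine Equiv.ofBijective (fun α => ⟨α • c, MulAction.mem_orbit _ _⟩) ⟨?_, ?_⟩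
    · intro α β h
      have h1 : α • c = β • c := congrArg Subtype.val h
      have h2 : (β⁻¹ * α) • c = c := by
        rw [mul_smul, h1, ← mul_smul, inv_mul_cancel, one_smul]
      have := hfree c _ h2
      have h4 : β * (β⁻¹ * α) = β * 1 := congrArg (β * ·) this
      rwa [← mul_assoc, mul_inv_cancel, one_mul, mul_one] at h4
    · rintro ⟨x, hx⟩
      obtain ⟨α, hα⟩ := MulAction.mem_orbit_iff.mp hx
      exact ⟨α, Subtype.ext hα⟩
  have e1 := MulAction.selfEquivSigmaOrbits (G ≃g G)
    {c : V → Fin k // IsDistinguishing G c ∧ Function.Surjective c}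
  have e2 := e1.trans (Equiv.sigmaCongrRight (fun ω => (equivOrbit ω.out).symm))
  have e3 := e2.trans (Equiv.sigmaEquivProd _ _)
  rw [Nat.card_congr e3, Nat.card_prod]
  congr 1
  apply Nat.card_congr
  apply Quot.congr (Equiv.refl _)
  intro c₁ c₂
  show MulAction.orbitRel (G ≃g G)
      {c : V → Fin k // IsDistinguishing G c ∧ Function.Surjective c} c₁ c₂ ↔
    (∃ α : G ≃g G, ∀ v, c₁.1 v = c₂.1 (α v))
  rw [MulAction.orbitRel_apply, MulAction.mem_orbit_iff]
  constructor
  · rintro ⟨α, hα⟩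
    refine ⟨α⁻¹, fun v => ?_⟩
    have := congrFun (congrArg Subtype.val hα) v
    rw [hsmul] at this
    exact this.symm
  · rintro ⟨α, hα⟩
    refine ⟨α⁻¹, Subtype.ext (funext fun v => ?_)⟩
    rw [hsmul, inv_inv]
    exact (hα v).symm
end Count

end Helpers

theorem phi_cycleGraph_of_ge (n k : ℕ) (hn : 3 ≤ n) (hk : n / 2 + 2 ≤ k) :
    phi (cycleGraph n) k = k.factorial * stirling2 n k / (2 * n) := by
  obtain ⟨m, rfl⟩ : ∃ m, n = m + 3 := ⟨n - 3, by omega⟩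
  have hTS : Nat.card {c : Fin (m+3) → Fin k //
      IsDistinguishing (cycleGraph (m+3)) c ∧ Function.Surjective c} = NSurj (m+3) k :=
    Nat.card_congr (Equiv.subtypeEquivRight (fun c =>
      ⟨And.right, fun hs => ⟨surj_isDist hk c hs, hs⟩⟩))
  have h1 : NSurj (m+3) k = phi (cycleGraph (m+3)) k * (2*(m+3)) := by
    rw [← hTS, orbit_count, card_aut m]
  rw [← NSurj_eq (m+3) k, h1, Nat.mul_div_cancel _ (by omega : 0 < 2*(m+3))]
end

section
/- For every integer n ≥ 1, one has 2·ψ₂(P_{2n+1}) = φ₂(P_{2n+1}), and 2·ψ₂(P_{2n}) = φ₂(P_{2n}) + 2^{n−1}. -/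
open SimpleGraph

section AuxNamespaceKE
open SimpleGraph Finset Function

def revIso (m : ℕ) : pathGraph m ≃g pathGraph m where
  toEquiv := ⟨Fin.rev, Fin.rev, Fin.rev_rev, Fin.rev_rev⟩
  map_rel_iff' := by
    intro u v
    simp only [Equiv.coe_fn_mk, pathGraph_adj, Fin.val_rev]
    have hu := u.isLt; have hv := v.isLt
    omega

@[simp] lemma revIso_apply (m : ℕ) (v : Fin m) : revIso m v = v.rev := rfl

lemma aut_id_of_zero (m : ℕ) (hm : 2 ≤ m) (α : pathGraph m ≃g pathGraph m)
    (h0 : (α ⟨0, by omega⟩).val = 0) : ∀ v : Fin m, α v = v := by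
  have key : ∀ k, ∀ hk : k < m, α ⟨k, hk⟩ = ⟨k, hk⟩ := by
    intro k
    induction k using Nat.strong_induction_on with
    | _ k ih =>
      intro hk
      match k, hk with
      | 0, hk => ext; exact h0
      | 1, hk =>
        have hadj : (pathGraph m).Adj (α ⟨0, by omega⟩) (α ⟨1, hk⟩) := by
          apply α.map_adj_iff.mpr
          rw [pathGraph_adj]; left; rfl
        rw [ih 0 (by omega) (by omega)] at hadj
        rw [pathGraph_adj] at hadj
        ext
        simp only [Fin.val_mk] at hadj ⊢
        omega
      | (k+2), hk =>
        have hadj : (pathGraph m).Adj (α ⟨k+1, by omega⟩) (α ⟨k+2, hk⟩) := by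
          apply α.map_adj_iff.mpr
          rw [pathGraph_adj]; left; rfl
        rw [ih (k+1) (by omega) (by omega)] at hadj
        rw [pathGraph_adj] at hadj
        simp only [Fin.val_mk] at hadj
        have hne : (α ⟨k+2, hk⟩).val ≠ k := by
          intro h
          have h2 := ih k (by omega) (by omega)
          have : α ⟨k+2, hk⟩ = α ⟨k, by omega⟩ := by
            rw [h2]; ext; exact h
          have := α.injective this
          simp only [Fin.mk.injEq] at this
          omega
        ext; simp only [Fin.val_mk]; omega
  intro v
  have := key v.val v.isLt
  simpa using this

lemma aut_zero_cases (m : ℕ) (hm : 2 ≤ m) (α : pathGraph m ≃g pathGraph m) :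
    (α ⟨0, by omega⟩).val = 0 ∨ (α ⟨0, by omega⟩).val = m - 1 := by
  by_contra h
  push_neg at h
  obtain ⟨h1, h2⟩ := h
  set j := α ⟨0, by omega⟩ with hj
  have hjlt := j.isLt
  have hjpos : 0 < j.val := Nat.pos_of_ne_zero h1
  -- j-1 and j+1 are both adjacent to j
  have hadj1 : (pathGraph m).Adj ⟨j.val - 1, by omega⟩ j := by
    rw [pathGraph_adj]; left; simp; omega
  have hadj2 : (pathGraph m).Adj ⟨j.val + 1, by omega⟩ j := by
    rw [pathGraph_adj]; right; simp
  -- their preimages are adjacent to 0, hence equal to 1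
  have key : ∀ w : Fin m, (pathGraph m).Adj w j → α.symm w = ⟨1, by omega⟩ := by
    intro w hw
    have : (pathGraph m).Adj (α.symm w) (α.symm j) := by
      apply α.symm.map_adj_iff.mpr; exact hw
    rw [hj] at this
    rw [RelIso.symm_apply_apply] at this
    rw [pathGraph_adj] at this
    ext
    simp only [Fin.val_mk] at this ⊢
    omega
  have e1 := key _ hadj1
  have e2 := key _ hadj2
  have : (⟨j.val - 1, by omega⟩ : Fin m) = ⟨j.val + 1, by omega⟩ :=
    α.symm.injective (e1.trans e2.symm)
  simp only [Fin.mk.injEq] at this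
  omega

lemma aut_classify (m : ℕ) (hm : 2 ≤ m) (α : pathGraph m ≃g pathGraph m) :
    (∀ v, α v = v) ∨ (∀ v, α v = v.rev) := by
  rcases aut_zero_cases m hm α with h | h
  · left; exact aut_id_of_zero m hm α h
  · right
    set β := α.trans (revIso m) with hβ
    have hβ0 : (β ⟨0, by omega⟩).val = 0 := by
      show ((revIso m) (α ⟨0, by omega⟩)).val = 0
      simp only [revIso_apply, Fin.val_rev]
      omega
    have := aut_id_of_zero m hm β hβ0
    intro v
    have hv := this v
    have : ((revIso m) (α v)) = v := hv
    have : (α v).rev = v := this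
    simpa using congrArg Fin.rev this

lemma quot_mk_eq_iff {X : Type*} {r : X → X → Prop} (hr : Equivalence r) (x y : X) :
    Quot.mk r x = Quot.mk r y ↔ r x y := by
  constructor
  · intro h
    exact hr.eqvGen_iff.mp (Quot.eq.mp h)
  · exact Quot.sound

lemma card_quot_invol {X : Type*} [Finite X] (f : X → X) (hf : ∀ x, f (f x) = x)
    (r : X → X → Prop) (hr : ∀ x y, r x y ↔ (x = y ∨ y = f x)) :
    2 * Nat.card (Quot r) = Nat.card X + Nat.card {x // f x = x} := by
  classical
  cases nonempty_fintype X
  letI : LinearOrder X := LinearOrder.lift' (fun x => ((Fintype.equivFin X) x : ℕ))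
    (fun a b h => (Fintype.equivFin X).injective (Fin.val_injective h))
  have hrequiv : Equivalence r := by
    constructor
    · intro x; rw [hr]; left; rfl
    · intro x y h; rw [hr] at *; rcases h with h | h
      · left; exact h.symm
      · right; rw [h, hf]
    · intro x y z h1 h2; rw [hr] at *
      rcases h1 with h1 | h1 <;> rcases h2 with h2 | h2
      · left; exact h1.trans h2
      · right; rw [h2, h1]
      · right; rw [← h2]; exact h1
      · left; rw [h2, h1, hf]
  have hmk := quot_mk_eq_iff hrequiv
  let g : X ⊕ {x // f x = x} → Quot r × Bool := fun a =>
    match a with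
    | Sum.inl x => (Quot.mk r x, decide (x ≤ f x))
    | Sum.inr x => (Quot.mk r x.1, false)
  have hg : Bijective g := by
    constructor
    · rintro (x | ⟨x, hx⟩) (y | ⟨y, hy⟩) h <;>
        simp only [g, Prod.mk.injEq, decide_eq_decide, decide_eq_false_iff_not] at h
      · obtain ⟨h1, h2⟩ := h
        rw [hmk, hr] at h1
        rcases h1 with h1 | h1
        · rw [h1]
        · subst h1
          -- y = f x ; h2 : x ≤ f x ↔ f x ≤ f (f x) = x
        
          rw [hf] at h2
          have : x = f x := by
            rcases le_total x (f x) with hle | hle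
            · exact le_antisymm hle (h2.mp hle)
            · exact le_antisymm (h2.mpr hle) hle
          simp [← this]
      · obtain ⟨h1, h2⟩ := h
        rw [hmk, hr] at h1
        exfalso
        rcases h1 with h1 | h1
        · subst h1; exact h2 (le_of_eq hy.symm)
        · subst h1; rw [hf] at hy; exact h2 (le_of_eq hy)
      · obtain ⟨h1, h2⟩ := h
        have h2' : ¬ y ≤ f y := by simpa using h2.symm
        rw [hmk, hr] at h1
        exfalso
        rcases h1 with h1 | h1
        · subst h1; exact h2' (le_of_eq hx.symm)
        · rw [hx] at h1; subst h1; exact h2' (le_of_eq hx.symm)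
      · obtain ⟨h1, -⟩ := h
        rw [hmk, hr] at h1
        rcases h1 with h1 | h1
        · simp [h1]
        · rw [hx] at h1; simp [h1]
    · rintro ⟨q, b⟩
      obtain ⟨x, rfl⟩ := Quot.exists_rep q
      cases b
      · -- b = false
        by_cases hx : f x = x
        · exact ⟨Sum.inr ⟨x, hx⟩, rfl⟩
        · rcases le_total x (f x) with hle | hle
          · refine ⟨Sum.inl (f x), ?_⟩
            simp only [g, Prod.mk.injEq]
            constructor
            · rw [hmk, hr]; right; exact (hf x).symm ▸ rfl
            · rw [hf]
              have : ¬ (f x ≤ x) := fun h => hx (le_antisymm h hle)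
              simp [this]
          · refine ⟨Sum.inl x, ?_⟩
            simp only [g, Prod.mk.injEq, true_and]
            have : ¬ (x ≤ f x) := fun h => hx (le_antisymm hle h)
            simp [this]
      · -- b = true
        rcases le_total x (f x) with hle | hle
        · exact ⟨Sum.inl x, by simp [g, hle]⟩
        · refine ⟨Sum.inl (f x), ?_⟩
          simp only [g, Prod.mk.injEq]
          constructor
          · rw [hmk, hr]; right; exact (hf x).symm ▸ rfl
          · rw [hf]; simp [hle]
  have := Nat.card_congr (Equiv.ofBijective g hg)
  rw [Nat.card_sum, Nat.card_prod, Nat.card_eq_fintype_card (α := Bool)] at this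
  simp only [Fintype.card_bool] at this
  omega

section Fin2
lemma fin2_ne_iff : ∀ i j : Fin 2, i ≠ j ↔ j = i + 1 := by decide
lemma fin2_cases : ∀ i j : Fin 2, j = i ∨ j = i + 1 := by decide
lemma fin2_self_ne_add_one : ∀ i : Fin 2, i ≠ i + 1 := by decide
end Fin2

section Corr
variable {m : ℕ} [NeZero m]

def fiber (c : Fin m → Fin 2) (j : Fin 2) : Finset (Fin m) :=
  Finset.univ.filter (fun v => c v = j)

lemma mem_fiber {c : Fin m → Fin 2} {j : Fin 2} {v : Fin m} :
    v ∈ fiber c j ↔ c v = j := by simp [fiber]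

lemma fiber_disj {c : Fin m → Fin 2} : Disjoint (fiber c 0) (fiber c 1) := by
  rw [Finset.disjoint_left]
  intro v h0 h1
  rw [mem_fiber] at h0 h1
  rw [h0] at h1
  exact absurd h1 (by decide)

lemma fiber_ne {c : Fin m → Fin 2} (hc : Surjective c) : fiber c 0 ≠ fiber c 1 := by
  obtain ⟨v, hv⟩ := hc 0
  intro h
  have h0 : v ∈ fiber c 0 := mem_fiber.mpr hv
  have h1 : v ∈ fiber c 1 := h ▸ h0
  rw [mem_fiber] at h1
  rw [hv] at h1
  exact absurd h1 (by decide)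

def pOf (c : Fin m → Fin 2) (hc : Surjective c) : Finpartition (Finset.univ : Finset (Fin m)) where
  parts := {fiber c 0, fiber c 1}
  supIndep := by
    rw [Finset.supIndep_iff_pairwiseDisjoint]
    intro a ha b hb hab
    simp only [coe_insert, Set.mem_insert_iff, coe_singleton, Set.mem_singleton_iff] at ha hb
    rcases ha with rfl | rfl <;> rcases hb with rfl | rfl
    · exact absurd rfl hab
    · exact fiber_disj
    · exact fiber_disj.symm
    · exact absurd rfl hab
  sup_parts := by
    ext v
    simp only [Finset.sup_insert, Finset.sup_singleton, id, Finset.sup_eq_union, Finset.mem_union, mem_fiber,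
      Finset.mem_univ, iff_true]
    rcases fin2_cases 0 (c v) with h | h
    · left; exact h
    · right; simpa using h
  bot_notMem := by
    intro h
    simp only [Finset.bot_eq_empty, Finset.mem_insert, Finset.mem_singleton] at h
    rcases h with h | h
    · obtain ⟨v, hv⟩ := hc 0
      have : v ∈ fiber c 0 := mem_fiber.mpr hv
      rw [← h] at this; exact absurd this (Finset.notMem_empty v)
    · obtain ⟨v, hv⟩ := hc 1
      have : v ∈ fiber c 1 := mem_fiber.mpr hv
      rw [← h] at this; exact absurd this (Finset.notMem_empty v)

lemma parts_pOf (c : Fin m → Fin 2) (hc : Surjective c) :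
    (pOf c hc).parts = {fiber c 0, fiber c 1} := rfl

lemma card_parts_pOf (c : Fin m → Fin 2) (hc : Surjective c) :
    (pOf c hc).parts.card = 2 := Finset.card_pair (fiber_ne hc)

lemma fiber_mem_parts_pOf (c : Fin m → Fin 2) (hc : Surjective c) (j : Fin 2) :
    fiber c j ∈ (pOf c hc).parts := by
  rw [parts_pOf]
  rcases fin2_cases 0 j with rfl | h
  · exact Finset.mem_insert_self _ _
  · have : j = 1 := by rw [h]; decide
    rw [this]
    exact Finset.mem_insert_of_mem (Finset.mem_singleton_self _)

lemma part_pOf (c : Fin m → Fin 2) (hc : Surjective c) (v : Fin m) :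
    (pOf c hc).part v = fiber c (c v) :=
  Finpartition.part_eq_of_mem _ (fiber_mem_parts_pOf c hc (c v)) (mem_fiber.mpr rfl)

/-- The coloring associated to a partition, coloring the part of `0` with `i`. -/
def cOf (P : Finpartition (Finset.univ : Finset (Fin m))) (i : Fin 2) : Fin m → Fin 2 :=
  fun v => if P.part v = P.part 0 then i else i + 1

lemma cOf_zero (P : Finpartition (Finset.univ : Finset (Fin m))) (i : Fin 2) :
    cOf P i 0 = i := if_pos rfl

lemma two_parts (P : Finpartition (Finset.univ : Finset (Fin m))) (h2 : P.parts.card = 2) :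
    ∃ B, P.parts = {P.part 0, B} ∧ P.part 0 ≠ B := by
  obtain ⟨A, B, hAB, hparts⟩ := Finset.card_eq_two.mp h2
  have h0 : P.part 0 ∈ P.parts := P.part_mem.mpr (Finset.mem_univ _)
  rw [hparts, Finset.mem_insert, Finset.mem_singleton] at h0
  rcases h0 with h0 | h0
  · exact ⟨B, by rw [hparts, h0], by rw [h0]; exact hAB⟩
  · exact ⟨A, by rw [hparts, h0, Finset.pair_comm], by rw [h0]; exact hAB.symm⟩

lemma mem_other_part (P : Finpartition (Finset.univ : Finset (Fin m))) {A B : Finset (Fin m)}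
    (hparts : P.parts = {A, B}) (hne : A ≠ B) (v : Fin m) : v ∈ B ↔ v ∉ A := by
  have hA : A ∈ P.parts := by rw [hparts]; exact Finset.mem_insert_self _ _
  have hB : B ∈ P.parts := by
    rw [hparts]; exact Finset.mem_insert_of_mem (Finset.mem_singleton_self _)
  have hdisj : Disjoint A B := P.disjoint hA hB hne
  constructor
  · intro hvB hvA
    exact Finset.disjoint_left.mp hdisj hvA hvB
  · intro hvA
    have hv : v ∈ P.parts.sup id := by rw [P.sup_parts]; exact Finset.mem_univ _
    rw [hparts] at hv
    simp only [Finset.sup_insert, Finset.sup_singleton, id, Finset.sup_eq_union, Finset.mem_union] at hv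
    tauto

lemma fiber_cOf_self (P : Finpartition (Finset.univ : Finset (Fin m))) (i : Fin 2) :
    fiber (cOf P i) i = P.part 0 := by
  ext v
  rw [mem_fiber, cOf]
  constructor
  · intro h
    by_cases hv : P.part v = P.part 0
    · rw [← hv]; exact P.mem_part (Finset.mem_univ _)
    · rw [if_neg hv] at h; exact absurd h.symm (fin2_self_ne_add_one i)
  · intro h
    have := (P.mem_part_iff_part_eq_part (Finset.mem_univ v) (Finset.mem_univ 0)).mp h
    rw [if_pos this]

lemma fiber_cOf_other (P : Finpartition (Finset.univ : Finset (Fin m))) (i : Fin 2) :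
    fiber (cOf P i) (i + 1) = Finset.univ \ P.part 0 := by
  ext v
  rw [mem_fiber, cOf, Finset.mem_sdiff]
  by_cases hv : P.part v = P.part 0
  · rw [if_pos hv]
    have hvmem : v ∈ P.part 0 := by
      rw [← hv]; exact P.mem_part (Finset.mem_univ _)
    simp [hvmem, (fin2_self_ne_add_one i)]
  · rw [if_neg hv]
    have hvmem : v ∉ P.part 0 := by
      intro h
      exact hv ((P.mem_part_iff_part_eq_part (Finset.mem_univ v) (Finset.mem_univ 0)).mp h)
    simp [hvmem]

lemma other_eq_sdiff (P : Finpartition (Finset.univ : Finset (Fin m))) {B : Finset (Fin m)}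
    (hparts : P.parts = {P.part 0, B}) (hne : P.part 0 ≠ B) :
    B = Finset.univ \ P.part 0 := by
  ext v
  rw [Finset.mem_sdiff, mem_other_part P hparts hne]
  simp

lemma parts_eq_fibers (P : Finpartition (Finset.univ : Finset (Fin m))) (h2 : P.parts.card = 2)
    (i : Fin 2) : P.parts = {fiber (cOf P i) i, fiber (cOf P i) (i + 1)} := by
  obtain ⟨B, hparts, hne⟩ := two_parts P h2
  rw [fiber_cOf_self, fiber_cOf_other, ← other_eq_sdiff P hparts hne]
  exact hparts

lemma cOf_surjective (P : Finpartition (Finset.univ : Finset (Fin m))) (h2 : P.parts.card = 2)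
    (i : Fin 2) : Surjective (cOf P i) := by
  intro j
  rcases fin2_cases i j with rfl | rfl
  · exact ⟨0, cOf_zero P _⟩
  · obtain ⟨B, hparts, hne⟩ := two_parts P h2
    have hB : B ∈ P.parts := by
      rw [hparts]; exact Finset.mem_insert_of_mem (Finset.mem_singleton_self _)
    obtain ⟨v, hv⟩ := P.nonempty_of_mem_parts hB
    refine ⟨v, ?_⟩
    have : v ∈ fiber (cOf P i) (i + 1) := by
      rw [fiber_cOf_other, ← other_eq_sdiff P hparts hne]
      exact hv
    exact mem_fiber.mp this

end Corr

section CorrTwo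
open SimpleGraph Finset Function
variable {m : ℕ} [NeZero m] {G : SimpleGraph (Fin m)}

lemma image_fiber_eq (c : Fin m → Fin 2) (α : G ≃g G) (hα : ∀ v, c (α v) = c v) (j : Fin 2) :
    (fiber c j).image α = fiber c j := by
  have hsub : (fiber c j).image α ⊆ fiber c j := by
    intro x hx
    obtain ⟨y, hy, rfl⟩ := Finset.mem_image.mp hx
    rw [mem_fiber] at hy ⊢
    rw [hα y]; exact hy
  exact Finset.eq_of_subset_of_card_le hsub
    (le_of_eq (Finset.card_image_of_injective _ α.injective).symm)

lemma pOf_DC (c : Fin m → Fin 2) (hd : IsDistinguishing G c) (hs : Surjective c) :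
    IsDCPartition G (pOf c hs) := by
  intro α hα v
  apply hd α _ v
  intro w
  have hmem : fiber c (c w) ∈ (pOf c hs).parts := fiber_mem_parts_pOf c hs (c w)
  have himg := hα _ hmem
  have : α w ∈ (fiber c (c w)).image α := Finset.mem_image_of_mem _ (mem_fiber.mpr rfl)
  rw [himg, mem_fiber] at this
  exact this

lemma cOf_distinguishing (P : Finpartition (Finset.univ : Finset (Fin m)))
    (hP : IsDCPartition G P) (h2 : P.parts.card = 2) (i : Fin 2) :
    IsDistinguishing G (cOf P i) := by
  intro α hα v
  apply hP α _ v
  intro p hp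
  rw [parts_eq_fibers P h2 i, Finset.mem_insert, Finset.mem_singleton] at hp
  rcases hp with rfl | rfl <;> exact image_fiber_eq _ α hα _

/-- The correspondence between surjective distinguishing 2-colorings and
2-cell distinguishing coloring partitions together with a color for the part of `0`. -/
noncomputable def corrEquiv (m : ℕ) [NeZero m] (G : SimpleGraph (Fin m)) :
    {c : Fin m → Fin 2 // IsDistinguishing G c ∧ Surjective c} ≃
    {P : Finpartition (Finset.univ : Finset (Fin m)) //
      IsDCPartition G P ∧ P.parts.card = 2} × Fin 2 where
  toFun := fun ⟨c, hd, hs⟩ => (⟨pOf c hs, pOf_DC c hd hs, card_parts_pOf c hs⟩, c 0)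
  invFun := fun ⟨⟨P, hP, h2⟩, i⟩ =>
    ⟨cOf P i, cOf_distinguishing P hP h2 i, cOf_surjective P h2 i⟩
  left_inv := by
    rintro ⟨c, hd, hs⟩
    apply Subtype.ext
    funext v
    show cOf (pOf c hs) (c 0) v = c v
    rw [cOf, part_pOf, part_pOf]
    by_cases h : c v = c 0
    · rw [h]; simp
    · have hne : fiber c (c v) ≠ fiber c (c 0) := by
        intro he
        have : v ∈ fiber c (c 0) := he ▸ mem_fiber.mpr rfl
        exact h (mem_fiber.mp this)
      rw [if_neg hne]
      exact ((fin2_ne_iff (c 0) (c v)).mp (Ne.symm h)).symm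
  right_inv := by
    rintro ⟨⟨P, hP, h2⟩, i⟩
    have hparts : (pOf (cOf P i) (cOf_surjective P h2 i)).parts = P.parts := by
      rw [parts_pOf, parts_eq_fibers P h2 i]
      rcases fin2_cases 0 i with rfl | rfl
      · rfl
      · rw [show ((0 : Fin 2) + 1 + 1) = 0 from rfl, show ((0 : Fin 2) + 1) = 1 from rfl,
          Finset.pair_comm]
    refine Prod.ext ?_ ?_
    · apply Subtype.ext
      exact Finpartition.ext hparts
    · exact cOf_zero P i

end CorrTwo

section MapPart
open SimpleGraph Finset Function
variable {m : ℕ}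

/-- Image of a finpartition of `univ` under a permutation. -/
def mapPart (e : Equiv.Perm (Fin m)) (P : Finpartition (Finset.univ : Finset (Fin m))) :
    Finpartition (Finset.univ : Finset (Fin m)) where
  parts := P.parts.image (fun p => p.image e)
  supIndep := by
    rw [Finset.supIndep_iff_pairwiseDisjoint]
    rintro a ha b hb hab
    simp only [Finset.coe_image, Set.mem_image, Finset.mem_coe] at ha hb
    obtain ⟨p, hp, rfl⟩ := ha
    obtain ⟨q, hq, rfl⟩ := hb
    have hpq : p ≠ q := by rintro rfl; exact hab rfl
    have := P.disjoint hp hq hpq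
    simp only [Function.id_def]
    exact (Finset.disjoint_image e.injective).mpr this
  sup_parts := by
    ext v
    simp only [Finset.mem_sup, Finset.mem_image, Finset.mem_univ, iff_true]
    obtain ⟨q, hq, hmem⟩ := P.exists_mem (Finset.mem_univ (e.symm v))
    exact ⟨q.image e, ⟨q, hq, rfl⟩, Finset.mem_image.mpr ⟨e.symm v, hmem, e.apply_symm_apply v⟩⟩
  bot_notMem := by
    intro h
    simp only [Finset.bot_eq_empty, Finset.mem_image] at h
    obtain ⟨p, hp, hpe⟩ := h
    rw [Finset.image_eq_empty] at hpe
    exact P.bot_notMem (by rwa [hpe, ← Finset.bot_eq_empty] at hp)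

lemma mapPart_parts (e : Equiv.Perm (Fin m)) (P : Finpartition (Finset.univ : Finset (Fin m))) :
    (mapPart e P).parts = P.parts.image (fun p => p.image e) := rfl

/-- `Fin.rev` as a permutation. -/
def revP (m : ℕ) : Equiv.Perm (Fin m) := ⟨Fin.rev, Fin.rev, Fin.rev_rev, Fin.rev_rev⟩

@[simp] lemma revP_apply (v : Fin m) : revP m v = v.rev := rfl

lemma image_revP_image_revP (s : Finset (Fin m)) :
    (s.image (revP m)).image (revP m) = s := by
  rw [Finset.image_image]
  have : ((revP m : Fin m → Fin m) ∘ (revP m : Fin m → Fin m)) = id := by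
    funext x; simp [Fin.rev_rev]
  rw [this, Finset.image_id]

lemma mapPart_revP_involutive (P : Finpartition (Finset.univ : Finset (Fin m))) :
    mapPart (revP m) (mapPart (revP m) P) = P := by
  apply Finpartition.ext
  rw [mapPart_parts, mapPart_parts, Finset.image_image]
  have : ((fun p : Finset (Fin m) => p.image (revP m)) ∘ (fun p => p.image (revP m))) = id := by
    funext p; simp only [Function.comp_apply, id_eq]; exact image_revP_image_revP p
  rw [this, Finset.image_id]

lemma revIso_coe_eq (m : ℕ) : ⇑(revIso m) = ⇑(revP m) := rfl

/-- Conjugating an automorphism by the reversal. -/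
def conjRev (m : ℕ) (α : pathGraph m ≃g pathGraph m) : pathGraph m ≃g pathGraph m :=
  ((revIso m).trans α).trans (revIso m)

lemma conjRev_apply (m : ℕ) (α : pathGraph m ≃g pathGraph m) (v : Fin m) :
    conjRev m α v = (α v.rev).rev := rfl

lemma conjRev_eq_id (m : ℕ) (α : pathGraph m ≃g pathGraph m)
    (h : ∀ v, conjRev m α v = v) : ∀ v, α v = v := by
  intro v
  have := h v.rev
  rw [conjRev_apply, Fin.rev_rev] at this
  have := congrArg Fin.rev this
  simp only [Fin.rev_rev] at this
  exact this

lemma mapPart_revP_DC (P : Finpartition (Finset.univ : Finset (Fin m)))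
    (hP : IsDCPartition (pathGraph m) P) : IsDCPartition (pathGraph m) (mapPart (revP m) P) := by
  intro α hα
  apply conjRev_eq_id
  apply hP (conjRev m α)
  intro p hp
  have hp' : p.image (revP m) ∈ (mapPart (revP m) P).parts := by
    rw [mapPart_parts]; exact Finset.mem_image_of_mem _ hp
  have h1 := hα _ hp'
  have : p.image ⇑(conjRev m α) = ((p.image (revP m)).image ⇑α).image (revP m) := by
    rw [Finset.image_image, Finset.image_image]
    rfl
  rw [this, h1, image_revP_image_revP]

lemma mapPart_card (e : Equiv.Perm (Fin m)) (P : Finpartition (Finset.univ : Finset (Fin m))) :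
    (mapPart e P).parts.card = P.parts.card := by
  rw [mapPart_parts]
  apply Finset.card_image_of_injective
  exact Finset.image_injective e.injective

end MapPart

section Invols
open SimpleGraph Finset Function

variable {m : ℕ}

instance finpartitionFinite : Finite (Finpartition (Finset.univ : Finset (Fin m))) :=
  Finite.of_injective (fun P => P.parts) (fun _ _ h => Finpartition.ext h)

/-- Surjective distinguishing 2-colorings of the path. -/
abbrev SD (m : ℕ) :=
  {c : Fin m → Fin 2 // IsDistinguishing (pathGraph m) c ∧ Surjective c}

/-- Distinguishing coloring partitions of the path with 2 cells. -/
abbrev TD (m : ℕ) :=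
  {P : Finpartition (Finset.univ : Finset (Fin m)) //
    IsDCPartition (pathGraph m) P ∧ P.parts.card = 2}

lemma dist_comp_rev (c : Fin m → Fin 2) (hd : IsDistinguishing (pathGraph m) c) :
    IsDistinguishing (pathGraph m) (c ∘ Fin.rev) := by
  intro α hα
  apply conjRev_eq_id
  apply hd (conjRev m α)
  intro v
  show c ((α v.rev).rev) = c v
  have := hα v.rev
  simp only [Function.comp_apply, Fin.rev_rev] at this
  rw [this]

def fS (m : ℕ) : SD m → SD m := fun x =>
  ⟨x.1 ∘ Fin.rev, dist_comp_rev x.1 x.2.1, x.2.2.comp Fin.rev_involutive.surjective⟩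

lemma fS_invol (x : SD m) : fS m (fS m x) = x :=
  Subtype.ext (funext fun v => by simp [fS, Fin.rev_rev])

def fT (m : ℕ) : TD m → TD m := fun x =>
  ⟨mapPart (revP m) x.1, mapPart_revP_DC x.1 x.2.1, by rw [mapPart_card]; exact x.2.2⟩

lemma fT_invol (x : TD m) : fT m (fT m x) = x :=
  Subtype.ext (mapPart_revP_involutive x.1)

lemma hrelS (hm : 2 ≤ m) (x y : SD m) :
    (∃ α : pathGraph m ≃g pathGraph m, ∀ v, x.1 v = y.1 (α v)) ↔ (x = y ∨ y = fS m x) := by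
  constructor
  · rintro ⟨α, hα⟩
    rcases aut_classify m hm α with h | h
    · left
      apply Subtype.ext; funext v
      have := hα v; rwa [h v] at this
    · right
      apply Subtype.ext; funext v
      show y.1 v = x.1 v.rev
      have := hα v.rev
      rw [h v.rev, Fin.rev_rev] at this
      exact this.symm
  · rintro (rfl | rfl)
    · exact ⟨RelIso.refl _, fun v => rfl⟩
    · refine ⟨revIso m, fun v => ?_⟩
      show x.1 v = (x.1 ∘ Fin.rev) ((revIso m) v)
      simp [Fin.rev_rev]
  
lemma hrelT (hm : 2 ≤ m) (x y : TD m) :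
    PartEquiv (pathGraph m) x.1 y.1 ↔ (x = y ∨ y = fT m x) := by
  constructor
  · rintro ⟨α, hα⟩
    rcases aut_classify m hm α with h | h
    · left
      apply Subtype.ext; apply Finpartition.ext
      rw [← hα]
      have he : Set.EqOn (fun p : Finset (Fin m) => p.image ⇑α) id x.1.parts := by
        intro p _
        simp only [id]
        rw [show ⇑α = id from funext h, Finset.image_id]
      rw [Finset.image_congr he, Finset.image_id]
    · right
      apply Subtype.ext; apply Finpartition.ext
      show y.1.parts = (mapPart (revP m) x.1).parts
      rw [← hα, mapPart_parts]
      apply Finset.image_congr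
      intro p _
      apply Finset.image_congr
      intro v _
      rw [h v]; rfl
  · rintro (rfl | rfl)
    · refine ⟨RelIso.refl _, ?_⟩
      have he : Set.EqOn (fun p : Finset (Fin m) => p.image ⇑(RelIso.refl (pathGraph m).Adj)) id
          x.1.parts := by
        intro p _
        simp only [id]
        rw [show ⇑(RelIso.refl (pathGraph m).Adj) = id from rfl, Finset.image_id]
      rw [Finset.image_congr he, Finset.image_id]
    · exact ⟨revIso m, rfl⟩

lemma two_mul_phi (hm : 2 ≤ m) : 2 * phi (pathGraph m) 2 = Nat.card (SD m) := by
  have hemp : IsEmpty {x : SD m // fS m x = x} := by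
    constructor
    rintro ⟨⟨c, hd, hs⟩, hfix⟩
    have hcc : c ∘ Fin.rev = c := congrArg Subtype.val hfix
    have h1 : ∀ v, c ((revIso m) v) = c v := fun v => congrFun hcc v
    have h2 := hd (revIso m) h1 ⟨0, by omega⟩
    have h3 : (⟨0, by omega⟩ : Fin m).rev = ⟨0, by omega⟩ := h2
    have h4 := congrArg Fin.val h3
    rw [Fin.val_rev] at h4
    simp only [Fin.val_mk] at h4
    omega
  have h := card_quot_invol (fS m) fS_invol _ (hrelS hm)
  have hz : Nat.card {x : SD m // fS m x = x} = 0 := by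
    haveI := hemp; exact Nat.card_of_isEmpty
  rw [hz, add_zero] at h
  unfold phi
  exact h

lemma two_mul_psi (hm : 2 ≤ m) :
    2 * psi (pathGraph m) 2 = Nat.card (TD m) + Nat.card {x : TD m // fT m x = x} := by
  have h := card_quot_invol (fT m) fT_invol _ (hrelT hm)
  unfold psi
  exact h

lemma card_SD (m : ℕ) [NeZero m] : Nat.card (SD m) = 2 * Nat.card (TD m) := by
  rw [Nat.card_congr (corrEquiv m (pathGraph m)), Nat.card_prod]
  rw [Nat.card_eq_fintype_card (α := Fin 2)]
  simp [mul_comm]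

end Invols

section FixedSets
open SimpleGraph Finset Function

lemma parts_unique_of_card_two {m : ℕ} (P : Finpartition (Finset.univ : Finset (Fin m)))
    (h2 : P.parts.card = 2) {A p q : Finset (Fin m)} (hA : A ∈ P.parts) (hp : p ∈ P.parts)
    (hq : q ∈ P.parts) (hpA : p ≠ A) (hqA : q ≠ A) : p = q := by
  obtain ⟨X, Y, hXY, hparts⟩ := Finset.card_eq_two.mp h2
  rw [hparts, Finset.mem_insert, Finset.mem_singleton] at hA hp hq
  rcases hA with rfl | rfl <;> rcases hp with rfl | rfl <;> rcases hq with rfl | rfl <;>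
    first | rfl | (exfalso; tauto)

lemma image_revP_ne_partZero {m : ℕ} [NeZero m] (hm : 2 ≤ m)
    (P : Finpartition (Finset.univ : Finset (Fin m))) (hP : IsDCPartition (pathGraph m) P)
    (h2 : P.parts.card = 2) (hfix : mapPart (revP m) P = P) {A : Finset (Fin m)}
    (hA : A ∈ P.parts) : A.image (revP m) ∈ P.parts ∧ (A.image (revP m) = A → False) := by
  have hparts : P.parts.image (fun p => p.image (revP m)) = P.parts := by
    conv_rhs => rw [← hfix]
    rfl
  have hmemA : A.image (revP m) ∈ P.parts := by
    rw [← hparts]; exact Finset.mem_image_of_mem _ hA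
  refine ⟨hmemA, fun hAA => ?_⟩
  -- if A is fixed by rev, then the other part is too, contradicting DC
  have hall : ∀ p ∈ P.parts, p.image ⇑(revIso m) = p := by
    intro p hp
    show p.image (revP m) = p
    by_cases hpA : p = A
    · rw [hpA, hAA]
    · have hmemp : p.image (revP m) ∈ P.parts := by
        rw [← hparts]; exact Finset.mem_image_of_mem _ hp
      have hne : p.image (revP m) ≠ A := by
        intro he
        apply hpA
        have := congrArg (fun s => Finset.image (revP m) s) he
        rw [image_revP_image_revP, hAA] at this
        exact this
      exact parts_unique_of_card_two P h2 hA hmemp hp hne hpA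
  have := hP (revIso m) hall ⟨0, by omega⟩
  have h4 := congrArg Fin.val this
  rw [revIso_apply, Fin.val_rev] at h4
  simp only [Fin.val_mk] at h4
  omega

lemma fixedT_empty_odd (n : ℕ) (hn : 1 ≤ n) :
    IsEmpty {x : TD (2 * n + 1) // fT (2 * n + 1) x = x} := by
  constructor
  rintro ⟨⟨P, hP, h2⟩, hfix⟩
  have hfix' : mapPart (revP (2 * n + 1)) P = P := congrArg Subtype.val hfix
  have hmid : n < 2 * n + 1 := by omega
  let mid : Fin (2 * n + 1) := ⟨n, hmid⟩
  have hmidrev : mid.rev = mid := by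
    apply Fin.ext
    rw [Fin.val_rev]
    simp only [Fin.val_mk, mid]
    omega
  have hA : P.part mid ∈ P.parts := P.part_mem.mpr (Finset.mem_univ _)
  have hmidA : mid ∈ P.part mid := P.mem_part (Finset.mem_univ _)
  obtain ⟨hmem, hcontra⟩ := image_revP_ne_partZero (m := 2 * n + 1) (by omega) P hP h2 hfix' hA
  apply hcontra
  have hmid_in : mid ∈ (P.part mid).image (revP (2 * n + 1)) :=
    Finset.mem_image.mpr ⟨mid, hmidA, by rw [revP_apply, hmidrev]⟩
  exact P.eq_of_mem_parts hmem hA hmid_in hmidA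

/-- Antipalindromic 2-colorings of the even path. -/
abbrev Anti (n : ℕ) := {c : Fin (2 * n) → Fin 2 // ∀ v, c v.rev ≠ c v}

lemma fin2_add_one_add_one : ∀ a : Fin 2, a + 1 + 1 = a := by decide

lemma anti_surj {n : ℕ} [NeZero (2 * n)] (c : Fin (2 * n) → Fin 2)
    (hc : ∀ v, c v.rev ≠ c v) : Surjective c := by
  intro j
  rcases fin2_cases (c 0) j with rfl | rfl
  · exact ⟨0, rfl⟩
  · refine ⟨(0 : Fin (2 * n)).rev, ?_⟩
    exact (fin2_ne_iff (c 0) (c (0 : Fin (2 * n)).rev)).mp (Ne.symm (hc 0))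

lemma anti_dist {n : ℕ} (hn : 1 ≤ n) (c : Fin (2 * n) → Fin 2)
    (hc : ∀ v, c v.rev ≠ c v) : IsDistinguishing (pathGraph (2 * n)) c := by
  intro α hα
  rcases aut_classify (2 * n) (by omega) α with h | h
  · exact h
  · intro v
    exfalso
    have := hα v
    rw [h v] at this
    exact hc v this

lemma fiber_image_rev_anti {n : ℕ} [NeZero (2 * n)] (c : Fin (2 * n) → Fin 2)
    (hc : ∀ v, c v.rev ≠ c v) (j : Fin 2) :
    (fiber c j).image (revP (2 * n)) = fiber c (j + 1) := by
  ext x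
  rw [Finset.mem_image, mem_fiber]
  constructor
  · rintro ⟨y, hy, rfl⟩
    rw [mem_fiber] at hy
    rw [revP_apply]
    have := hc y
    rw [hy] at this
    exact (fin2_ne_iff j (c y.rev)).mp (Ne.symm this)
  · intro hx
    refine ⟨x.rev, ?_, by rw [revP_apply, Fin.rev_rev]⟩
    rw [mem_fiber]
    have := hc x.rev
    rw [Fin.rev_rev, hx] at this
    have := (fin2_ne_iff (j + 1) (c x.rev)).mp this
    rw [this, fin2_add_one_add_one]

end FixedSets

section Final
open SimpleGraph Finset Function

lemma cOf_pOf {m : ℕ} [NeZero m] (c : Fin m → Fin 2) (hs : Surjective c) :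
    cOf (pOf c hs) (c 0) = c := by
  funext v
  rw [cOf, part_pOf, part_pOf]
  by_cases h : c v = c 0
  · rw [h]; simp
  · have hne : fiber c (c v) ≠ fiber c (c 0) := by
      intro he
      have : v ∈ fiber c (c 0) := he ▸ mem_fiber.mpr rfl
      exact h (mem_fiber.mp this)
    rw [if_neg hne]
    exact ((fin2_ne_iff (c 0) (c v)).mp (Ne.symm h)).symm

lemma parts_pOf_cOf {m : ℕ} [NeZero m] (P : Finpartition (Finset.univ : Finset (Fin m)))
    (h2 : P.parts.card = 2) (i : Fin 2) (hs : Surjective (cOf P i)) :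
    (pOf (cOf P i) hs).parts = P.parts := by
  rw [parts_pOf, parts_eq_fibers P h2 i]
  rcases fin2_cases 0 i with rfl | rfl
  · rfl
  · rw [show ((0 : Fin 2) + 1 + 1) = 0 from rfl, show ((0 : Fin 2) + 1) = 1 from rfl,
      Finset.pair_comm]

/-- Antipalindromic colorings correspond to rev-fixed 2-cell DC partitions with a color choice. -/
noncomputable def AntiEquiv (n : ℕ) (hn : 1 ≤ n) [NeZero (2 * n)] :
    Anti n ≃ {x : TD (2 * n) // fT (2 * n) x = x} × Fin 2 where
  toFun := fun ⟨c, hc⟩ =>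
    (⟨⟨pOf c (anti_surj c hc), pOf_DC c (anti_dist hn c hc) _, card_parts_pOf _ _⟩, by
      apply Subtype.ext
      show mapPart (revP (2 * n)) (pOf c (anti_surj c hc)) = pOf c (anti_surj c hc)
      apply Finpartition.ext
      rw [mapPart_parts, parts_pOf, Finset.image_insert, Finset.image_singleton,
        fiber_image_rev_anti c hc 0, fiber_image_rev_anti c hc 1,
        show ((0 : Fin 2) + 1) = 1 from rfl, show ((1 : Fin 2) + 1) = 0 from rfl,
        Finset.pair_comm]⟩, c 0)
  invFun := fun ⟨⟨⟨P, hP, h2⟩, hfix⟩, i⟩ =>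
    ⟨cOf P i, by
      have hfix' : mapPart (revP (2 * n)) P = P := congrArg Subtype.val hfix
      have hA := P.part_mem.mpr (Finset.mem_univ (0 : Fin (2 * n)))
      obtain ⟨hmem, hne⟩ := image_revP_ne_partZero (by omega) P hP h2 hfix' hA
      obtain ⟨B, hparts, hBne⟩ := two_parts P h2
      have himg : (P.part 0).image (revP (2 * n)) = B := by
        rw [hparts, Finset.mem_insert, Finset.mem_singleton] at hmem
        rcases hmem with h | h
        · exact absurd h hne
        · exact h
      have hBother : B = Finset.univ \ P.part 0 := other_eq_sdiff P hparts hBne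
      intro v
      rcases fin2_cases i (cOf P i v) with h | h
      · have hv : v ∈ P.part 0 := by
          rw [← fiber_cOf_self P i]; exact mem_fiber.mpr h
        have hrv : v.rev ∈ B := by
          rw [← himg]; exact Finset.mem_image.mpr ⟨v, hv, rfl⟩
        have hcv : cOf P i v.rev = i + 1 := by
          apply mem_fiber.mp
          rw [fiber_cOf_other, ← hBother]
          exact hrv
        rw [hcv, h]
        exact Ne.symm (fin2_self_ne_add_one i)
      · have hv : v ∈ B := by
          rw [hBother, ← fiber_cOf_other P i]
          exact mem_fiber.mpr h
        have hB2 : B.image (revP (2 * n)) = P.part 0 := by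
          rw [← himg, image_revP_image_revP]
        have hrv : v.rev ∈ P.part 0 := by
          rw [← hB2]; exact Finset.mem_image.mpr ⟨v, hv, rfl⟩
        have hcv : cOf P i v.rev = i := by
          apply mem_fiber.mp
          rw [fiber_cOf_self]
          exact hrv
        rw [hcv, h]
        exact fin2_self_ne_add_one i⟩
  left_inv := by
    rintro ⟨c, hc⟩
    apply Subtype.ext
    exact cOf_pOf c (anti_surj c hc)
  right_inv := by
    rintro ⟨⟨⟨P, hP, h2⟩, hfix⟩, i⟩
    refine Prod.ext ?_ (cOf_zero P i)
    apply Subtype.ext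
    apply Subtype.ext
    apply Finpartition.ext
    apply parts_pOf_cOf P h2 i
    exact cOf_surjective P h2 i

/-- Extension of a half-coloring to an antipalindromic coloring. -/
def antiExt (n : ℕ) (g : Fin n → Fin 2) : Fin (2 * n) → Fin 2 := fun v =>
  if h : v.1 < n then g ⟨v.1, h⟩ else g ⟨2 * n - 1 - v.1, by have := v.isLt; omega⟩ + 1

lemma antiExt_lt {n : ℕ} (g : Fin n → Fin 2) (v : Fin (2 * n)) (h : v.1 < n) :
    antiExt n g v = g ⟨v.1, h⟩ := dif_pos h

lemma antiExt_ge {n : ℕ} (g : Fin n → Fin 2) (v : Fin (2 * n)) (h : ¬ v.1 < n) :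
    antiExt n g v = g ⟨2 * n - 1 - v.1, by have := v.isLt; omega⟩ + 1 := dif_neg h

lemma antiExt_anti (n : ℕ) (g : Fin n → Fin 2) : ∀ v, antiExt n g v.rev ≠ antiExt n g v := by
  intro v
  have hlt := v.isLt
  by_cases h : v.1 < n
  · have hrev : ¬ (v.rev.1 < n) := by rw [Fin.val_rev]; omega
    rw [antiExt_ge g v.rev hrev, antiExt_lt g v h]
    have hidx : (⟨2 * n - 1 - v.rev.1, by have := v.rev.isLt; omega⟩ : Fin n) = ⟨v.1, h⟩ := by
      apply Fin.ext
      simp only [Fin.val_mk, Fin.val_rev]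
      omega
    rw [hidx]
    exact Ne.symm (fin2_self_ne_add_one _)
  · have hrev : v.rev.1 < n := by rw [Fin.val_rev]; omega
    rw [antiExt_lt g v.rev hrev, antiExt_ge g v h]
    have hidx : (⟨v.rev.1, hrev⟩ : Fin n) = ⟨2 * n - 1 - v.1, by omega⟩ := by
      apply Fin.ext
      simp only [Fin.val_mk, Fin.val_rev]
      omega
    rw [hidx]
    exact fin2_self_ne_add_one _

/-- Antipalindromic colorings are determined by their first half. -/
def antiFunEquiv (n : ℕ) : Anti n ≃ (Fin n → Fin 2) where
  toFun := fun x k => x.1 ⟨k.1, by omega⟩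
  invFun := fun g => ⟨antiExt n g, antiExt_anti n g⟩
  left_inv := by
    rintro ⟨c, hc⟩
    apply Subtype.ext
    funext v
    have hlt := v.isLt
    show antiExt n (fun k => c ⟨k.1, by omega⟩) v = c v
    by_cases h : v.1 < n
    · rw [antiExt_lt _ v h]
    · rw [antiExt_ge _ v h]
      show c ⟨(⟨2 * n - 1 - v.1, by omega⟩ : Fin n).1, by omega⟩ + 1 = c v
      have hidx : (⟨(⟨2 * n - 1 - v.1, by omega⟩ : Fin n).1, by omega⟩ : Fin (2 * n)) = v.rev := by
        apply Fin.ext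
        simp only [Fin.val_mk, Fin.val_rev]
        omega
      rw [hidx]
      have h2 : c v.rev = c v + 1 := (fin2_ne_iff (c v) (c v.rev)).mp (Ne.symm (hc v))
      rw [h2, fin2_add_one_add_one]
  right_inv := by
    intro g
    funext k
    have hk := k.isLt
    show antiExt n g ⟨k.1, by omega⟩ = g k
    rw [antiExt_lt g _ (show ((⟨k.1, by omega⟩ : Fin (2 * n))).1 < n from hk)]

lemma two_mul_card_fixedT (n : ℕ) (hn : 1 ≤ n) :
    2 * Nat.card {x : TD (2 * n) // fT (2 * n) x = x} = 2 ^ n := by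
  haveI : NeZero (2 * n) := ⟨by omega⟩
  have h1 : Nat.card (Anti n) = 2 ^ n := by
    rw [Nat.card_congr (antiFunEquiv n), Nat.card_eq_fintype_card]
    simp
  rw [← h1, Nat.card_congr (AntiEquiv n hn), Nat.card_prod,
    Nat.card_eq_fintype_card (α := Fin 2)]
  simp [mul_comm]

end Final

end AuxNamespaceKE

theorem psi_two_pathGraph (n : ℕ) (hn : 1 ≤ n) :
    2 * psi (pathGraph (2 * n + 1)) 2 = phi (pathGraph (2 * n + 1)) 2 ∧
    2 * psi (pathGraph (2 * n)) 2 = phi (pathGraph (2 * n)) 2 + 2 ^ (n - 1) := by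
  constructor
  · have hphi := two_mul_phi (m := 2 * n + 1) (by omega)
    have hpsi := two_mul_psi (m := 2 * n + 1) (by omega)
    have hcard := card_SD (2 * n + 1)
    have hz : Nat.card {x : TD (2 * n + 1) // fT (2 * n + 1) x = x} = 0 := by
      haveI := fixedT_empty_odd n hn
      exact Nat.card_of_isEmpty
    omega
  · haveI : NeZero (2 * n) := ⟨by omega⟩
    have hphi := two_mul_phi (m := 2 * n) (by omega)
    have hpsi := two_mul_psi (m := 2 * n) (by omega)
    have hcard := card_SD (2 * n)
    have hfix := two_mul_card_fixedT n hn
    have hpow : 2 ^ n = 2 * 2 ^ (n - 1) := by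
      have h : n - 1 + 1 = n := by omega
      conv_lhs => rw [← h]
      rw [pow_succ]
      ring
    omega
end
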